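/- arXiv:2412.01619 — 7 statements merged into one kernel-verified Lean document; each statement's English description precedes it below -/
import Mathlib

section
/- Let σ : ℝ → ℝ be continuous with σ(x) = 0 for x ≤ 0 and σ(x) > 0 for x > 0, and let Ω ⊆ ℝ^(d+1) be a compact set containing an open ball centered at 0. Then for any N ≥ 1 and any dataset {(x_i, y_i)}_{i=1}^N ⊆ ℝ^d × ℝ with x_i ≠ x_j for i ≠ j, there exist parameters (ω_j, a_j, b_j) ∈ ℝ × Ω for j = 1,…,N such that ∑_{j=1}^N ω_j σ(⟨a_j, x_i⟩ + b_j) = y_i for all i = 1,…,N. -/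
open scoped InnerProductSpace

lemma exists_separating {d N : ℕ} (x : Fin N → EuclideanSpace ℝ (Fin d))
    (hx : Function.Injective x) :
    ∃ v : EuclideanSpace ℝ (Fin d), Function.Injective fun i => ⟪v, x i⟫_ℝ := by
  by_contra h
  push_neg at h
  let ι := {q : Fin N × Fin N // q.1 ≠ q.2}
  let p : ι → Subspace ℝ (EuclideanSpace ℝ (Fin d)) := fun q =>
    LinearMap.ker ((innerSL ℝ (x q.1.1 - x q.1.2)).toLinearMap)
  have hcovers : ⋃ i, (p i : Set (EuclideanSpace ℝ (Fin d))) = Set.univ := by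
    apply Set.eq_univ_of_forall
    intro v
    obtain ⟨i, j, hij, hne⟩ := Function.not_injective_iff.1 (h v)
    refine Set.mem_iUnion.2 ⟨⟨(i, j), hne⟩, ?_⟩
    simp only [p, SetLike.mem_coe, LinearMap.mem_ker, ContinuousLinearMap.coe_coe,
      innerSL_apply_apply, inner_sub_left]
    rw [real_inner_comm v (x i), real_inner_comm v (x j)]
    rw [hij, sub_self]
  obtain ⟨q, hq⟩ := Subspace.exists_eq_top_of_iUnion_eq_univ hcovers
  have hmem : x q.1.1 - x q.1.2 ∈ p q := by rw [hq]; trivial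
  have h0 : ⟪x q.1.1 - x q.1.2, x q.1.1 - x q.1.2⟫_ℝ = 0 := hmem
  rw [inner_self_eq_zero, sub_eq_zero] at h0
  exact q.2 (hx h0)

/-- The N-sample exact representation property of shallow neural networks with
parameters constrained to a compact set Ω containing a ball around the origin. -/
theorem shallow_nn_finite_sample_representation {d N : ℕ} (hN : 1 ≤ N)
    (σ : ℝ → ℝ) (hσc : Continuous σ)
    (hσ0 : ∀ t : ℝ, t ≤ 0 → σ t = 0) (hσp : ∀ t : ℝ, 0 < t → 0 < σ t)
    (Ω : Set (EuclideanSpace ℝ (Fin d) × ℝ)) (hΩc : IsCompact Ω)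
    (r : ℝ) (hr : 0 < r)
    (hball : Metric.ball (0 : EuclideanSpace ℝ (Fin d) × ℝ) r ⊆ Ω)
    (x : Fin N → EuclideanSpace ℝ (Fin d)) (y : Fin N → ℝ)
    (hx : Function.Injective x) :
    ∃ (ω : Fin N → ℝ) (a : Fin N → EuclideanSpace ℝ (Fin d)) (b : Fin N → ℝ),
      (∀ j, (a j, b j) ∈ Ω) ∧
      ∀ i, ∑ j, ω j * σ (⟪a j, x i⟫_ℝ + b j) = y i := by
  haveI : NeZero N := ⟨by omega⟩
  obtain ⟨v, hv⟩ := exists_separating x hx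
  set t : Fin N → ℝ := fun i => ⟪v, x i⟫_ℝ with ht
  set π := Tuple.sort t with hπ
  set s : Fin N → ℝ := t ∘ π with hsdef
  have hsmono : StrictMono s :=
    (Tuple.monotone_sort t).strictMono_of_injective (hv.comp π.injective)
  -- choose the gap η
  obtain ⟨η, hη0, hηlt⟩ : ∃ η : ℝ, 0 < η ∧ ∀ i j : Fin N, i < j → s i + η < s j := by
    set P : Finset (Fin N × Fin N) := Finset.univ.filter fun p => p.1 < p.2 with hP
    by_cases hPne : P.Nonempty
    · obtain ⟨p0, hp0, hmin⟩ := Finset.exists_min_image P (fun p => s p.2 - s p.1) hPne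
      have hp0lt : p0.1 < p0.2 := by simpa [hP] using hp0
      have hg0 : 0 < s p0.2 - s p0.1 := sub_pos.2 (hsmono hp0lt)
      refine ⟨(s p0.2 - s p0.1) / 2, by linarith, fun i j hij => ?_⟩
      have := hmin (i, j) (by simp [hP, hij])
      simp only at this
      linarith
    · refine ⟨1, one_pos, fun i j hij => absurd ?_ hPne⟩
      exact ⟨(i, j), by simp [hP, hij]⟩
  -- choose the scale ε
  have hne : (Finset.univ : Finset (Fin N)).Nonempty := Finset.univ_nonempty
  set B : ℝ := Finset.univ.sup' hne (fun j => |η - s j|) with hB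
  set K : ℝ := ‖v‖ + B + 1 with hK
  have hBnn : 0 ≤ B := le_trans (abs_nonneg _) (Finset.le_sup' (fun j => |η - s j|) (Finset.mem_univ (Classical.arbitrary (Fin N))))
  have hK0 : 0 < K := by positivity
  set ε : ℝ := r / K with hε
  have hε0 : 0 < ε := div_pos hr hK0
  have hεv : ε * ‖v‖ < r := by
    rw [hε, div_mul_eq_mul_div, div_lt_iff₀ hK0]
    nlinarith [norm_nonneg v]
  have hεb : ∀ j, ε * |η - s j| < r := by
    intro j
    have hj : |η - s j| ≤ B := Finset.le_sup' (fun j => |η - s j|) (Finset.mem_univ j)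
    rw [hε, div_mul_eq_mul_div, div_lt_iff₀ hK0]
    nlinarith [abs_nonneg (η - s j), norm_nonneg v]
  -- the matrix
  set M : Matrix (Fin N) (Fin N) ℝ := Matrix.of fun i j => σ (ε * (s i - s j + η)) with hM
  have hTri : M.BlockTriangular OrderDual.toDual := by
    intro i j hij
    have hij' : i < j := hij
    have : s i - s j + η < 0 := by have := hηlt i j hij'; linarith
    exact hσ0 _ (le_of_lt (mul_neg_of_pos_of_neg hε0 this))
  have hdiag : ∀ i, M i i = σ (ε * η) := by intro i; simp [hM]
  have hdet : M.det ≠ 0 := by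
    rw [Matrix.det_of_lowerTriangular M hTri]
    apply Finset.prod_ne_zero_iff.2
    intro i _
    rw [hdiag]
    exact ne_of_gt (hσp _ (mul_pos hε0 hη0))
  set ω : Fin N → ℝ := M⁻¹.mulVec (y ∘ π) with hω
  have hMω : M.mulVec ω = y ∘ π := by
    rw [hω, Matrix.mulVec_mulVec, Matrix.mul_nonsing_inv _ (isUnit_iff_ne_zero.2 hdet),
      Matrix.one_mulVec]
  refine ⟨ω, fun _ => ε • v, fun j => ε * (η - s j), fun j => ?_, fun i => ?_⟩
  · apply hball
    rw [Metric.mem_ball, dist_zero_right, Prod.norm_def]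
    apply max_lt
    · simpa [norm_smul, abs_of_pos hε0] using hεv
    · simpa [abs_mul, abs_of_pos hε0] using hεb j
  · have key : ∀ j, ⟪ε • v, x i⟫_ℝ + ε * (η - s j) = ε * (s (π.symm i) - s j + η) := by
      intro j
      have hti : s (π.symm i) = t i := by
        simp [hsdef, hπ]
      rw [real_inner_smul_left, hti]
      simp only [ht]
      ring
    calc ∑ j, ω j * σ (⟪ε • v, x i⟫_ℝ + ε * (η - s j))
        = ∑ j, M (π.symm i) j * ω j := by
          apply Finset.sum_congr rfl
          intro j _
          rw [key j, mul_comm]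
          rfl
      _ = (M.mulVec ω) (π.symm i) := rfl
      _ = y i := by rw [hMω]; simp
end

section
/- Under the same hypotheses (σ continuous, vanishing on (-∞,0], positive on (0,∞); Ω compact containing a ball around 0), if x* is an extreme point of the convex hull of finitely many distinct points x_1,…,x_{N+1} ⊆ ℝ^d, say x* = x_{i*}, then there exists (a, b) ∈ Ω such that ⟨a, x_i⟩ + b < 0 for all i ≠ i* and ⟨a, x_{i*}⟩ + b > 0; consequently σ(⟨a, x_i⟩ + b) = 0 for i ≠ i* and σ(⟨a, x_{i*}⟩ + b) > 0. -/
open scoped InnerProductSpace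

/-- Separation of an extreme point of the convex hull of finitely many distinct
points by an affine hyperplane with parameters in Ω, and its consequence for the
activation function σ. -/
theorem extreme_point_separation {d N : ℕ}
    (σ : ℝ → ℝ) (hσc : Continuous σ)
    (hσ0 : ∀ t : ℝ, t ≤ 0 → σ t = 0) (hσp : ∀ t : ℝ, 0 < t → 0 < σ t)
    (Ω : Set (EuclideanSpace ℝ (Fin d) × ℝ)) (hΩc : IsCompact Ω)
    (r : ℝ) (hr : 0 < r)
    (hball : Metric.ball (0 : EuclideanSpace ℝ (Fin d) × ℝ) r ⊆ Ω)
    (x : Fin (N + 1) → EuclideanSpace ℝ (Fin d)) (hx : Function.Injective x)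
    (istar : Fin (N + 1))
    (hext : x istar ∈ Set.extremePoints ℝ (convexHull ℝ (Set.range x))) :
    ∃ θ ∈ Ω,
      (∀ i, i ≠ istar → ⟪θ.1, x i⟫_ℝ + θ.2 < 0) ∧
      (0 < ⟪θ.1, x istar⟫_ℝ + θ.2) ∧
      (∀ i, i ≠ istar → σ (⟪θ.1, x i⟫_ℝ + θ.2) = 0) ∧
      0 < σ (⟪θ.1, x istar⟫_ℝ + θ.2) := by
  classical
  set T : Set (EuclideanSpace ℝ (Fin d)) :=
    convexHull ℝ (x '' {i | i ≠ istar}) with hT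
  -- x istar is not in T
  have hnotmem : x istar ∉ T := by
    rw [(convex_convexHull ℝ (Set.range x)).mem_extremePoints_iff_mem_diff_convexHull_diff]
      at hext
    intro hmem
    apply hext.2
    refine convexHull_mono ?_ hmem
    rintro y ⟨i, hi, rfl⟩
    exact ⟨subset_convexHull ℝ _ ⟨i, rfl⟩, fun h => hi (hx h)⟩
  have hTclosed : IsClosed T :=
    (Set.Finite.image x (Set.toFinite _)).isClosed_convexHull (𝕜 := ℝ)
  obtain ⟨f, s, hfs, hsf⟩ :=
    geometric_hahn_banach_closed_point (convex_convexHull ℝ _) hTclosed hnotmem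
  set a0 : EuclideanSpace ℝ (Fin d) := (InnerProductSpace.toDual ℝ _).symm f with ha0
  have ha0f : ∀ y, ⟪a0, y⟫_ℝ = f y := fun y =>
    InnerProductSpace.toDual_symm_apply
  set b0 : ℝ := -s with hb0
  set ε : ℝ := r / (2 * (‖a0‖ + |b0| + 1)) with hε
  have hden : 0 < ‖a0‖ + |b0| + 1 := by positivity
  have hεpos : 0 < ε := by positivity
  refine ⟨(ε • a0, ε * b0), ?_, ?_, ?_, ?_, ?_⟩
  · apply hball
    rw [Metric.mem_ball, dist_zero_right, Prod.norm_def]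
    have h1 : ‖ε • a0‖ < r := by
      rw [norm_smul, Real.norm_eq_abs, abs_of_pos hεpos]
      calc ε * ‖a0‖ ≤ ε * (‖a0‖ + |b0| + 1) := by
            apply mul_le_mul_of_nonneg_left _ hεpos.le
            linarith [abs_nonneg b0]
        _ = r / 2 := by rw [hε]; field_simp
        _ < r := by linarith
    have h2 : ‖ε * b0‖ < r := by
      rw [Real.norm_eq_abs, abs_mul, abs_of_pos hεpos]
      calc ε * |b0| ≤ ε * (‖a0‖ + |b0| + 1) := by
            apply mul_le_mul_of_nonneg_left _ hεpos.le
            linarith [norm_nonneg a0]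
        _ = r / 2 := by rw [hε]; field_simp
        _ < r := by linarith
    exact max_lt h1 h2
  · intro i hi
    have : f (x i) < s := hfs (x i) (subset_convexHull ℝ _ ⟨i, hi, rfl⟩)
    have hix : ⟪a0, x i⟫_ℝ + b0 < 0 := by rw [ha0f]; simp [hb0]; linarith
    have : ⟪ε • a0, x i⟫_ℝ + ε * b0 = ε * (⟪a0, x i⟫_ℝ + b0) := by
      rw [real_inner_smul_left]; ring
    rw [this]
    exact mul_neg_of_pos_of_neg hεpos hix
  · have hix : 0 < ⟪a0, x istar⟫_ℝ + b0 := by rw [ha0f]; simp [hb0]; linarith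
    have heq : ⟪ε • a0, x istar⟫_ℝ + ε * b0 = ε * (⟪a0, x istar⟫_ℝ + b0) := by
      rw [real_inner_smul_left]; ring
    rw [heq]
    exact mul_pos hεpos hix
  · intro i hi
    apply hσ0
    have : f (x i) < s := hfs (x i) (subset_convexHull ℝ _ ⟨i, hi, rfl⟩)
    have hix : ⟪a0, x i⟫_ℝ + b0 < 0 := by rw [ha0f]; simp [hb0]; linarith
    have heq : ⟪ε • a0, x i⟫_ℝ + ε * b0 = ε * (⟪a0, x i⟫_ℝ + b0) := by
      rw [real_inner_smul_left]; ring
    rw [heq]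
    exact (mul_neg_of_pos_of_neg hεpos hix).le
  · apply hσp
    have hix : 0 < ⟪a0, x istar⟫_ℝ + b0 := by rw [ha0f]; simp [hb0]; linarith
    have heq : ⟪ε • a0, x istar⟫_ℝ + ε * b0 = ε * (⟪a0, x istar⟫_ℝ + b0) := by
      rw [real_inner_smul_left]; ring
    rw [heq]
    exact mul_pos hεpos hix
end

section
/- Let σ be L-Lipschitz and let m_train = (1/N)∑_i δ_{(x_i,y_i)}, m_test = (1/N')∑_i δ_{(x'_i,y'_i)}, m_pred(Θ) = (1/N')∑_i δ_{(x'_i, f(x'_i,Θ))}, m_X = (1/N)∑_i δ_{x_i}, m_{X'} = (1/N')∑_i δ_{x'_i}. Then for any parameters Θ, d_KR(m_test, m_pred(Θ)) ≤ d_KR(m_train, m_test) + d_KR(m_X, m_{X'}) + (1/N)∑_{i=1}^N |f(x_i,Θ) − y_i| + d_KR(m_X, m_{X'}) · L · ∑_{j=1}^P |ω_j|‖a_j‖. -/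
open MeasureTheory
open scoped InnerProductSpace NNReal ENNReal

/-- The Kantorovich–Rubinstein distance: supremum over 1-Lipschitz test
functions of the difference of integrals. -/
noncomputable def dKR {E : Type*} [MeasurableSpace E] [PseudoMetricSpace E]
    (μ ν : Measure E) : ℝ :=
  ⨆ F : {F : E → ℝ // LipschitzWith 1 F}, (∫ z, F.1 z ∂μ - ∫ z, F.1 z ∂ν)

/-- The empirical measure of a finite family of points. -/
noncomputable def empirical {E : Type*} [MeasurableSpace E] {N : ℕ}
    (pts : Fin N → E) : Measure E :=
  (N : ℝ≥0∞)⁻¹ • ∑ i, Measure.dirac (pts i)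


lemma integral_empirical {E : Type*} [MeasurableSpace E] [MeasurableSingletonClass E]
    {N : ℕ} (pts : Fin N → E) (g : E → ℝ) (hg : StronglyMeasurable g) :
    ∫ z, g z ∂ empirical pts = (N : ℝ)⁻¹ * ∑ i, g (pts i) := by
  have hint : ∀ i : Fin N, Integrable g (Measure.dirac (pts i)) := by
    intro i
    have h : g =ᵐ[Measure.dirac (pts i)] fun _ => g (pts i) := by
      rw [ae_dirac_eq]; exact Filter.eventually_pure.2 rfl
    exact (integrable_const (g (pts i))).congr h.symm
  unfold empirical
  rw [integral_smul_measure, integral_finset_sum_measure (fun i _ => hint i)]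
  simp [integral_dirac' _ _ hg, ENNReal.toReal_inv]

lemma bddAbove_dKR {E : Type*} [MeasurableSpace E] [PseudoMetricSpace E]
    [MeasurableSingletonClass E] [OpensMeasurableSpace E]
    {N N' : ℕ} (hN : 0 < N) (hN' : 0 < N') (p : Fin N → E) (q : Fin N' → E) :
    BddAbove (Set.range fun F : {F : E → ℝ // LipschitzWith 1 F} =>
      (∫ z, F.1 z ∂ empirical p - ∫ z, F.1 z ∂ empirical q)) := by
  have hNpos : (0:ℝ) < N := by exact_mod_cast hN
  have hN'pos : (0:ℝ) < N' := by exact_mod_cast hN'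
  set q0 : E := q ⟨0, hN'⟩ with hq0
  set C1 : ℝ := Finset.univ.sup' (Finset.univ_nonempty_iff.2 ⟨⟨0, hN⟩⟩)
    (fun i => dist (p i) q0) with hC1
  set C2 : ℝ := Finset.univ.sup' (Finset.univ_nonempty_iff.2 ⟨⟨0, hN'⟩⟩)
    (fun j => dist (q j) q0) with hC2
  refine ⟨C1 + C2, ?_⟩
  rintro v ⟨⟨F, hF⟩, rfl⟩
  have hFm : StronglyMeasurable F := hF.continuous.stronglyMeasurable
  simp only []
  rw [integral_empirical p F hFm, integral_empirical q F hFm]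
  have key : ∀ z w : E, |F z - F w| ≤ dist z w := fun z w => by
    rw [← Real.dist_eq]; simpa using hF.dist_le_mul z w
  have h1 : (N:ℝ)⁻¹ * ∑ i, F (p i) ≤ F q0 + C1 := by
    rw [inv_mul_le_iff₀ hNpos]
    calc ∑ i, F (p i) ≤ ∑ _i : Fin N, (F q0 + C1) := by
          refine Finset.sum_le_sum fun i _ => ?_
          have hd : dist (p i) q0 ≤ C1 :=
            Finset.le_sup' (fun i => dist (p i) q0) (Finset.mem_univ i)
          have := (le_abs_self (F (p i) - F q0)).trans ((key _ _).trans hd)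
          linarith
      _ = N * (F q0 + C1) := by
          simp [Finset.sum_const, nsmul_eq_mul]; ring
  have h2 : F q0 - C2 ≤ (N':ℝ)⁻¹ * ∑ j, F (q j) := by
    rw [le_inv_mul_iff₀ hN'pos]
    calc (N':ℝ) * (F q0 - C2) = ∑ _j : Fin N', (F q0 - C2) := by
          simp [Finset.sum_const, nsmul_eq_mul]; ring
      _ ≤ ∑ j, F (q j) := by
          refine Finset.sum_le_sum fun j _ => ?_
          have hd : dist (q j) q0 ≤ C2 :=
            Finset.le_sup' (fun j => dist (q j) q0) (Finset.mem_univ j)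
          have := (le_abs_self (F q0 - F (q j))).trans
            ((key q0 (q j)).trans ((dist_comm (q j) q0) ▸ hd))
          linarith
  linarith

lemma diff_le_dKR {E : Type*} [MeasurableSpace E] [PseudoMetricSpace E]
    [MeasurableSingletonClass E] [OpensMeasurableSpace E]
    {N N' : ℕ} (hN : 0 < N) (hN' : 0 < N') (p : Fin N → E) (q : Fin N' → E)
    (F : E → ℝ) (hF : LipschitzWith 1 F) :
    (N:ℝ)⁻¹ * ∑ i, F (p i) - (N':ℝ)⁻¹ * ∑ j, F (q j) ≤
      dKR (empirical p) (empirical q) := by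
  have hFm : StronglyMeasurable F := hF.continuous.stronglyMeasurable
  have := le_ciSup (bddAbove_dKR hN hN' p q) (⟨F, hF⟩ : {F : E → ℝ // LipschitzWith 1 F})
  rw [integral_empirical p F hFm, integral_empirical q F hFm] at this
  exact this

/-- Generalization bound for shallow neural networks in Kantorovich–Rubinstein
distance. -/
theorem generalization_bound_dKR {d P N N' : ℕ} (hN : 0 < N) (hN' : 0 < N')
    (σ : ℝ → ℝ) (L : ℝ≥0) (hσ : LipschitzWith L σ)
    (ω : Fin P → ℝ) (a : Fin P → EuclideanSpace ℝ (Fin d)) (b : Fin P → ℝ)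
    (x : Fin N → EuclideanSpace ℝ (Fin d)) (y : Fin N → ℝ)
    (x' : Fin N' → EuclideanSpace ℝ (Fin d)) (y' : Fin N' → ℝ)
    (f : EuclideanSpace ℝ (Fin d) → ℝ)
    (hf : ∀ z, f z = ∑ j, ω j * σ (⟪a j, z⟫_ℝ + b j)) :
    dKR (empirical fun i => (x' i, y' i)) (empirical fun i => (x' i, f (x' i))) ≤
      dKR (empirical fun i => (x i, y i)) (empirical fun i => (x' i, y' i)) +
      dKR (empirical x) (empirical x') +
      (1 / (N : ℝ)) * ∑ i, |f (x i) - y i| +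
      dKR (empirical x) (empirical x') * L * ∑ j, |ω j| * ‖a j‖ := by
  set K : ℝ := (L : ℝ) * ∑ j, |ω j| * ‖a j‖ with hK
  have hK0 : 0 ≤ K := by
    apply mul_nonneg L.coe_nonneg
    exact Finset.sum_nonneg fun j _ => mul_nonneg (abs_nonneg _) (norm_nonneg _)
  have h1K : (0:ℝ) < 1 + K := by linarith
  -- f is K-Lipschitz
  have hfL : ∀ z w, |f z - f w| ≤ K * dist z w := by
    intro z w
    rw [hf z, hf w, ← Finset.sum_sub_distrib]
    calc |∑ j, (ω j * σ (⟪a j, z⟫_ℝ + b j) - ω j * σ (⟪a j, w⟫_ℝ + b j))|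
        ≤ ∑ j, |ω j * σ (⟪a j, z⟫_ℝ + b j) - ω j * σ (⟪a j, w⟫_ℝ + b j)| :=
          Finset.abs_sum_le_sum_abs _ _
      _ ≤ ∑ j, |ω j| * ((L:ℝ) * (‖a j‖ * ‖z - w‖)) := by
          refine Finset.sum_le_sum fun j _ => ?_
          rw [← mul_sub, abs_mul]
          refine mul_le_mul_of_nonneg_left ?_ (abs_nonneg _)
          have h1 : |σ (⟪a j, z⟫_ℝ + b j) - σ (⟪a j, w⟫_ℝ + b j)| ≤
              (L:ℝ) * |⟪a j, z⟫_ℝ + b j - (⟪a j, w⟫_ℝ + b j)| := by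
            have := hσ.dist_le_mul (⟪a j, z⟫_ℝ + b j) (⟪a j, w⟫_ℝ + b j)
            simpa [Real.dist_eq] using this
          have h2 : |⟪a j, z⟫_ℝ + b j - (⟪a j, w⟫_ℝ + b j)| ≤ ‖a j‖ * ‖z - w‖ := by
            have : ⟪a j, z⟫_ℝ + b j - (⟪a j, w⟫_ℝ + b j) = ⟪a j, z - w⟫_ℝ := by
              rw [inner_sub_right]; ring
            rw [this]
            exact abs_real_inner_le_norm _ _
          calc |σ (⟪a j, z⟫_ℝ + b j) - σ (⟪a j, w⟫_ℝ + b j)|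
              ≤ (L:ℝ) * |⟪a j, z⟫_ℝ + b j - (⟪a j, w⟫_ℝ + b j)| := h1
            _ ≤ (L:ℝ) * (‖a j‖ * ‖z - w‖) := by
                exact mul_le_mul_of_nonneg_left h2 L.coe_nonneg
      _ = K * dist z w := by
          rw [dist_eq_norm, hK, mul_assoc, Finset.sum_mul, Finset.mul_sum]
          exact Finset.sum_congr rfl fun j _ => by ring
  have hne : Nonempty {F : (EuclideanSpace ℝ (Fin d) × ℝ) → ℝ // LipschitzWith 1 F} :=
    ⟨⟨fun _ => 0, (LipschitzWith.const 0).weaken zero_le_one⟩⟩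
  refine ciSup_le fun FF => ?_
  obtain ⟨F, hF⟩ := FF
  simp only []
  have hFm : StronglyMeasurable F := hF.continuous.stronglyMeasurable
  have keyF : ∀ z w, |F z - F w| ≤ dist z w := fun z w => by
    rw [← Real.dist_eq]; simpa using hF.dist_le_mul z w
  rw [integral_empirical _ F hFm, integral_empirical _ F hFm]
  -- A1
  have A1 := diff_le_dKR hN hN' (fun i => (x i, y i)) (fun i => (x' i, y' i))
    (fun z => -F z) hF.neg
  simp only [Finset.sum_neg_distrib, mul_neg] at A1
  -- A2
  have A2 : (N:ℝ)⁻¹ * ∑ i, F (x i, y i) - (N:ℝ)⁻¹ * ∑ i, F (x i, f (x i)) ≤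
      (N:ℝ)⁻¹ * ∑ i, |f (x i) - y i| := by
    rw [← mul_sub, ← Finset.sum_sub_distrib]
    refine mul_le_mul_of_nonneg_left ?_ (by positivity)
    refine Finset.sum_le_sum fun i _ => ?_
    have := (le_abs_self (F (x i, y i) - F (x i, f (x i)))).trans
      (keyF (x i, y i) (x i, f (x i)))
    have hd : dist ((x i, y i) : EuclideanSpace ℝ (Fin d) × ℝ) (x i, f (x i)) =
        |f (x i) - y i| := by
      rw [Prod.dist_eq]
      simp [Real.dist_eq, abs_sub_comm]
    linarith [this, hd.le, hd.ge]
  -- A3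
  set G : EuclideanSpace ℝ (Fin d) → ℝ := fun z => (1 + K)⁻¹ * F (z, f z) with hG
  have hGL : LipschitzWith 1 G := by
    apply LipschitzWith.of_dist_le_mul
    intro z w
    rw [NNReal.coe_one, one_mul, hG]
    simp only [Real.dist_eq, ← mul_sub, abs_mul, abs_of_pos (inv_pos.2 h1K)]
    rw [inv_mul_le_iff₀ h1K]
    have hd : dist ((z, f z) : EuclideanSpace ℝ (Fin d) × ℝ) (w, f w) ≤
        (1 + K) * dist z w := by
      rw [Prod.dist_eq]
      apply max_le
      · nlinarith [dist_nonneg (x := z) (y := w)]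
      · rw [Real.dist_eq]
        nlinarith [hfL z w, dist_nonneg (x := z) (y := w)]
    calc |F (z, f z) - F (w, f w)| ≤ dist ((z, f z) :
          EuclideanSpace ℝ (Fin d) × ℝ) (w, f w) := keyF _ _
      _ ≤ (1 + K) * dist z w := hd
  have A3' := diff_le_dKR hN hN' x x' G hGL
  have A3 : (N:ℝ)⁻¹ * ∑ i, F (x i, f (x i)) - (N':ℝ)⁻¹ * ∑ i, F (x' i, f (x' i)) ≤
      (1 + K) * dKR (empirical x) (empirical x') := by
    have hmul := mul_le_mul_of_nonneg_left A3' h1K.le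
    have e1 : (1 + K) * ((N:ℝ)⁻¹ * ∑ i, G (x i) - (N':ℝ)⁻¹ * ∑ i, G (x' i)) =
        (N:ℝ)⁻¹ * ∑ i, F (x i, f (x i)) - (N':ℝ)⁻¹ * ∑ i, F (x' i, f (x' i)) := by
      simp only [hG, ← Finset.mul_sum]
      field_simp
    rw [e1] at hmul
    exact hmul
  have hid : dKR (empirical x) (empirical x') +
      dKR (empirical x) (empirical x') * (L:ℝ) * (∑ j, |ω j| * ‖a j‖) =
      (1 + K) * dKR (empirical x) (empirical x') := by rw [hK]; ring
  have hN1 : (1 / (N:ℝ)) = (N:ℝ)⁻¹ := one_div _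
  rw [hN1]
  linarith [A1, A2, A3, hid]
end

section
/- Fix N' = N. Let W_p denote the p-Wasserstein distance between the empirical measures m_train = (1/N)∑δ_{(x_i,y_i)} and m_test = (1/N)∑δ_{(x'_i,y'_i)} (realized as a minimum over permutations τ of {1,…,N} of ((1/N)∑_i ‖(x_i − x'_{τ(i)}, y_i − y'_{τ(i)})‖^p)^{1/p}). If σ is L-Lipschitz, then for any p ≥ 1 and any Θ: ((1/N)∑_{i=1}^N |y'_i − f(x'_i,Θ)|^p)^{1/p} ≤ W_p(m_train, m_test) + ((1/N)∑_{i=1}^N |f(x_i,Θ) − y_i|^p)^{1/p} + W_p(m_train, m_test) · L · ∑_{j=1}^P |ω_j|‖a_j‖. -/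
open scoped InnerProductSpace NNReal

/-- Generalization bound in mean-ℓᵖ error via the p-Wasserstein distance
between the empirical training and testing measures (N' = N), the latter
realized as an optimal matching over permutations. -/
theorem generalization_bound_mean_lp {d P N : ℕ} (hN : 0 < N)
    (σ : ℝ → ℝ) (L : ℝ≥0) (hσ : LipschitzWith L σ)
    (ω : Fin P → ℝ) (a : Fin P → EuclideanSpace ℝ (Fin d)) (b : Fin P → ℝ)
    (x : Fin N → EuclideanSpace ℝ (Fin d)) (y : Fin N → ℝ)
    (x' : Fin N → EuclideanSpace ℝ (Fin d)) (y' : Fin N → ℝ)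
    (f : EuclideanSpace ℝ (Fin d) → ℝ)
    (hf : ∀ z, f z = ∑ j, ω j * σ (⟪a j, z⟫_ℝ + b j))
    (p : ℝ) (hp : 1 ≤ p)
    (Wp : ℝ)
    (hWp : Wp = ⨅ τ : Equiv.Perm (Fin N),
      ((1 / (N : ℝ)) * ∑ i,
        (Real.sqrt (‖x i - x' (τ i)‖ ^ 2 + (y i - y' (τ i)) ^ 2)) ^ p) ^ (1 / p)) :
    ((1 / (N : ℝ)) * ∑ i, |y' i - f (x' i)| ^ p) ^ (1 / p) ≤
      Wp + ((1 / (N : ℝ)) * ∑ i, |f (x i) - y i| ^ p) ^ (1 / p) +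
        Wp * L * ∑ j, |ω j| * ‖a j‖ := by
  have hp0 : (0 : ℝ) < p := lt_of_lt_of_le one_pos hp
  have hNinv : (0 : ℝ) ≤ 1 / (N : ℝ) := by positivity
  set K : ℝ := (L : ℝ) * ∑ j, |ω j| * ‖a j‖ with hKdef
  have hK0 : 0 ≤ K :=
    mul_nonneg L.coe_nonneg (Finset.sum_nonneg fun j _ =>
      mul_nonneg (abs_nonneg _) (norm_nonneg _))
  -- cost of a permutation
  set C : Equiv.Perm (Fin N) → ℝ := fun τ =>
    ((1 / (N : ℝ)) * ∑ i,
      (Real.sqrt (‖x i - x' (τ i)‖ ^ 2 + (y i - y' (τ i)) ^ 2)) ^ p) ^ (1 / p) with hC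
  obtain ⟨τ, -, hτ⟩ := Finset.exists_min_image Finset.univ C Finset.univ_nonempty
  have hWτ : Wp = C τ := by
    rw [hWp]
    refine le_antisymm (ciInf_le ((Set.finite_range C).bddBelow) τ)
      (le_ciInf fun τ' => hτ τ' (Finset.mem_univ _))
  set D : Fin N → ℝ := fun i =>
    Real.sqrt (‖x i - x' (τ i)‖ ^ 2 + (y i - y' (τ i)) ^ 2) with hDdef
  have hD0 : ∀ i, 0 ≤ D i := fun i => Real.sqrt_nonneg _
  have hyD : ∀ i, |y' (τ i) - y i| ≤ D i := by
    intro i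
    rw [abs_sub_comm, ← Real.sqrt_sq_eq_abs]
    exact Real.sqrt_le_sqrt (by nlinarith [sq_nonneg ‖x i - x' (τ i)‖])
  have hxD : ∀ i, ‖x i - x' (τ i)‖ ≤ D i := by
    intro i
    rw [← Real.sqrt_sq (norm_nonneg _)]
    exact Real.sqrt_le_sqrt (by nlinarith [sq_nonneg (y i - y' (τ i))])
  have hfL : ∀ i, |f (x i) - f (x' (τ i))| ≤ K * D i := by
    intro i
    rw [hf, hf, ← Finset.sum_sub_distrib]
    calc |∑ j, (ω j * σ (⟪a j, x i⟫_ℝ + b j) - ω j * σ (⟪a j, x' (τ i)⟫_ℝ + b j))|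
        ≤ ∑ j, |ω j * σ (⟪a j, x i⟫_ℝ + b j) - ω j * σ (⟪a j, x' (τ i)⟫_ℝ + b j)| :=
          Finset.abs_sum_le_sum_abs _ _
      _ ≤ ∑ j, (L : ℝ) * (|ω j| * ‖a j‖) * D i := by
          refine Finset.sum_le_sum fun j _ => ?_
          rw [← mul_sub, abs_mul]
          have h1 : |σ (⟪a j, x i⟫_ℝ + b j) - σ (⟪a j, x' (τ i)⟫_ℝ + b j)| ≤
              (L : ℝ) * |⟪a j, x i⟫_ℝ - ⟪a j, x' (τ i)⟫_ℝ| := by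
            have := hσ.dist_le_mul (⟪a j, x i⟫_ℝ + b j) (⟪a j, x' (τ i)⟫_ℝ + b j)
            simpa [Real.dist_eq, add_sub_add_right_eq_sub] using this
          have h2 : |⟪a j, x i⟫_ℝ - ⟪a j, x' (τ i)⟫_ℝ| ≤ ‖a j‖ * D i := by
            rw [← inner_sub_right]
            calc |⟪a j, x i - x' (τ i)⟫_ℝ| ≤ ‖a j‖ * ‖x i - x' (τ i)‖ :=
                abs_real_inner_le_norm _ _
              _ ≤ ‖a j‖ * D i := mul_le_mul_of_nonneg_left (hxD i) (norm_nonneg _)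
          calc |ω j| * |σ (⟪a j, x i⟫_ℝ + b j) - σ (⟪a j, x' (τ i)⟫_ℝ + b j)|
              ≤ |ω j| * ((L : ℝ) * (‖a j‖ * D i)) := by
                refine mul_le_mul_of_nonneg_left (h1.trans ?_) (abs_nonneg _)
                exact mul_le_mul_of_nonneg_left h2 L.coe_nonneg
            _ = (L : ℝ) * (|ω j| * ‖a j‖) * D i := by ring
      _ = K * D i := by rw [hKdef, ← Finset.sum_mul, Finset.mul_sum]
  have key : ∀ i, |y' (τ i) - f (x' (τ i))| ≤ D i + |f (x i) - y i| + K * D i := by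
    intro i
    have : y' (τ i) - f (x' (τ i)) =
        (y' (τ i) - y i) + (y i - f (x i)) + (f (x i) - f (x' (τ i))) := by ring
    rw [this]
    calc |(y' (τ i) - y i) + (y i - f (x i)) + (f (x i) - f (x' (τ i)))|
        ≤ |(y' (τ i) - y i) + (y i - f (x i))| + |f (x i) - f (x' (τ i))| := abs_add_le _ _
      _ ≤ (|y' (τ i) - y i| + |y i - f (x i)|) + |f (x i) - f (x' (τ i))| :=
          add_le_add_left (abs_add_le _ _) _
      _ ≤ D i + |f (x i) - y i| + K * D i := by
          rw [abs_sub_comm (y i)]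
          exact add_le_add (add_le_add (hyD i) le_rfl) (hfL i)
  -- reindex LHS sum by τ
  have hsum : ∑ i, |y' i - f (x' i)| ^ p = ∑ i, |y' (τ i) - f (x' (τ i))| ^ p :=
    (Equiv.sum_comp τ fun i => |y' i - f (x' i)| ^ p).symm
  set c : ℝ := (1 / (N : ℝ)) ^ (1 / p) with hcdef
  have hc0 : 0 ≤ c := Real.rpow_nonneg hNinv _
  have hSD0 : (0 : ℝ) ≤ ∑ i, D i ^ p :=
    Finset.sum_nonneg fun i _ => Real.rpow_nonneg (hD0 i) _
  have step1 : ((1 / (N : ℝ)) * ∑ i, |y' i - f (x' i)| ^ p) ^ (1 / p) ≤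
      ((1 / (N : ℝ)) * ∑ i, (D i + |f (x i) - y i| + K * D i) ^ p) ^ (1 / p) := by
    apply Real.rpow_le_rpow (by positivity) _ (by positivity)
    apply mul_le_mul_of_nonneg_left _ hNinv
    rw [hsum]
    refine Finset.sum_le_sum fun i _ => ?_
    exact Real.rpow_le_rpow (abs_nonneg _) (key i) (le_of_lt hp0)
  have hmink : (∑ i, (D i + |f (x i) - y i| + K * D i) ^ p) ^ (1 / p) ≤
      ((∑ i, D i ^ p) ^ (1 / p) + (∑ i, |f (x i) - y i| ^ p) ^ (1 / p))
        + (∑ i, (K * D i) ^ p) ^ (1 / p) := by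
    calc (∑ i, (D i + |f (x i) - y i| + K * D i) ^ p) ^ (1 / p)
        ≤ (∑ i, (D i + |f (x i) - y i|) ^ p) ^ (1 / p)
          + (∑ i, (K * D i) ^ p) ^ (1 / p) :=
          Real.Lp_add_le_of_nonneg Finset.univ hp
            (fun i _ => add_nonneg (hD0 i) (abs_nonneg _))
            (fun i _ => mul_nonneg hK0 (hD0 i))
      _ ≤ ((∑ i, D i ^ p) ^ (1 / p) + (∑ i, |f (x i) - y i| ^ p) ^ (1 / p))
          + (∑ i, (K * D i) ^ p) ^ (1 / p) := by
          refine add_le_add_left ?_ _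
          exact Real.Lp_add_le_of_nonneg Finset.univ hp (fun i _ => hD0 i) (fun i _ => abs_nonneg _)
  have hKD : (∑ i, (K * D i) ^ p) ^ (1 / p) = K * (∑ i, D i ^ p) ^ (1 / p) := by
    have h1 : ∑ i, (K * D i) ^ p = K ^ p * ∑ i, D i ^ p := by
      rw [Finset.mul_sum]
      exact Finset.sum_congr rfl fun i _ => Real.mul_rpow hK0 (hD0 i)
    rw [h1, Real.mul_rpow (Real.rpow_nonneg hK0 _) hSD0, ← Real.rpow_mul hK0,
      mul_one_div, div_self (ne_of_gt hp0), Real.rpow_one]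
  have hWc : Wp = c * (∑ i, D i ^ p) ^ (1 / p) := by
    rw [hWτ, hC, ← Real.mul_rpow hNinv hSD0]
  calc ((1 / (N : ℝ)) * ∑ i, |y' i - f (x' i)| ^ p) ^ (1 / p)
      ≤ ((1 / (N : ℝ)) * ∑ i, (D i + |f (x i) - y i| + K * D i) ^ p) ^ (1 / p) := step1
    _ = c * (∑ i, (D i + |f (x i) - y i| + K * D i) ^ p) ^ (1 / p) :=
        Real.mul_rpow hNinv (Finset.sum_nonneg fun i _ => Real.rpow_nonneg (by positivity) _)
    _ ≤ c * (((∑ i, D i ^ p) ^ (1 / p) + (∑ i, |f (x i) - y i| ^ p) ^ (1 / p))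
          + (∑ i, (K * D i) ^ p) ^ (1 / p)) := mul_le_mul_of_nonneg_left hmink hc0
    _ = (c * (∑ i, D i ^ p) ^ (1 / p)) + (c * (∑ i, |f (x i) - y i| ^ p) ^ (1 / p))
          + c * (K * (∑ i, D i ^ p) ^ (1 / p)) := by rw [hKD]; ring
    _ = Wp + ((1 / (N : ℝ)) * ∑ i, |f (x i) - y i| ^ p) ^ (1 / p) +
          Wp * L * ∑ j, |ω j| * ‖a j‖ := by
        rw [hWc, Real.mul_rpow hNinv
          (Finset.sum_nonneg fun i _ => Real.rpow_nonneg (abs_nonneg _) _), ← hcdef, hKdef]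
        ring
end

section
/- One step of the sparsification algorithm preserves outputs and does not increase the ℓ¹ norm: let A ∈ ℝ^{N×p}, ω ∈ ℝ^p with all ω_j ≠ 0, and suppose A is not full column rank. Choose 0 ≠ w̃ with A w̃ = 0, set α_j = w̃_j/ω_j, j* ∈ argmax_j |α_j|, β = −1/α_{j*}, and define ω̂_j = (1+βα_j)ω_j, ω̄_j = (1−βα_j)ω_j. Then: (i) Aω̂ = Aω̄ = Aω; (ii) ω̂_{j*} = 0; (iii) min(‖ω̂‖₁, ‖ω̄‖₁) ≤ ‖ω‖₁, with ‖ω‖₁ = (‖ω̂‖₁ + ‖ω̄‖₁)/2. -/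
/-- One step of the sparsification algorithm: it preserves the network outputs
(the image under A), kills the coordinate j*, and does not increase the
ℓ¹-norm. -/
theorem sparsification_step {N p : ℕ}
    (A : Matrix (Fin N) (Fin p) ℝ) (ω : Fin p → ℝ) (hω : ∀ j, ω j ≠ 0)
    (wt : Fin p → ℝ) (hwt : wt ≠ 0) (hker : A.mulVec wt = 0)
    (α : Fin p → ℝ) (hα : ∀ j, α j = wt j / ω j)
    (jstar : Fin p) (hjstar : ∀ j, |α j| ≤ |α jstar|)
    (β : ℝ) (hβ : β = -1 / α jstar)
    (ωh ωb : Fin p → ℝ)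
    (hωh : ∀ j, ωh j = (1 + β * α j) * ω j)
    (hωb : ∀ j, ωb j = (1 - β * α j) * ω j) :
    A.mulVec ωh = A.mulVec ω ∧ A.mulVec ωb = A.mulVec ω ∧
    ωh jstar = 0 ∧
    min (∑ j, |ωh j|) (∑ j, |ωb j|) ≤ ∑ j, |ω j| ∧
    ∑ j, |ω j| = ((∑ j, |ωh j|) + ∑ j, |ωb j|) / 2 := by
  have hαω : ∀ j, α j * ω j = wt j := by
    intro j; rw [hα]; field_simp [hω j]
  have hjne : α jstar ≠ 0 := by
    intro h
    apply hwt
    funext j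
    have h1 := hjstar j
    rw [h, abs_zero] at h1
    have h2 : α j = 0 := abs_nonpos_iff.mp h1
    have := hαω j
    rw [h2, zero_mul] at this
    exact this.symm
  have hβα : β * α jstar = -1 := by
    rw [hβ]; field_simp
  have habs : ∀ j, |β * α j| ≤ 1 := by
    intro j
    rw [abs_mul, hβ, abs_div, abs_neg, abs_one]
    rw [div_mul_eq_mul_div, one_mul, div_le_one (abs_pos.mpr hjne)]
    exact hjstar j
  have h1 : ∀ j, 0 ≤ 1 + β * α j := by
    intro j; have := (abs_le.mp (habs j)).1; linarith
  have h2 : ∀ j, 0 ≤ 1 - β * α j := by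
    intro j; have := (abs_le.mp (habs j)).2; linarith
  have hωh' : ωh = ω + β • wt := by
    funext j
    rw [hωh]
    simp only [Pi.add_apply, Pi.smul_apply, smul_eq_mul, ← hαω j]
    ring
  have hωb' : ωb = ω - β • wt := by
    funext j
    rw [hωb]
    simp only [Pi.sub_apply, Pi.smul_apply, smul_eq_mul, ← hαω j]
    ring
  have mh : A.mulVec ωh = A.mulVec ω := by
    rw [hωh', Matrix.mulVec_add, Matrix.mulVec_smul, hker, smul_zero, add_zero]
  have mb : A.mulVec ωb = A.mulVec ω := by
    rw [hωb', Matrix.mulVec_sub, Matrix.mulVec_smul, hker, smul_zero, sub_zero]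
  have hzero : ωh jstar = 0 := by
    rw [hωh, hβα]; ring
  have hsum : (∑ j, |ωh j|) + ∑ j, |ωb j| = 2 * ∑ j, |ω j| := by
    rw [← Finset.sum_add_distrib, Finset.mul_sum]
    apply Finset.sum_congr rfl
    intro j _
    rw [hωh, hωb, abs_mul, abs_mul, abs_of_nonneg (h1 j), abs_of_nonneg (h2 j)]
    ring
  refine ⟨mh, mb, hzero, ?_, by linarith⟩
  rcases le_total (∑ j, |ωh j|) (∑ j, |ωb j|) with h | h
  · rw [min_eq_left h]; linarith
  · rw [min_eq_right h]; linarith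
end

section
/- If the input Θ of the sparsification algorithm has P > N neurons and is a global minimizer of the ℓ¹-regularized regression problem inf ∑_j|ω_j| + (λ/N)∑_i ℓ(∑_j ω_j σ(⟨a_j,x_i⟩+b_j) − y_i), then the algorithm terminates in at most P iterations and outputs parameters with at most N nonzero weights that achieve the same objective value, hence a minimizer of the same problem with P = N neurons (padding with zeros). -/
private lemma sum_extend {c n : ℕ} (h : c ≤ n) (f : Fin c → ℝ) :
    (∑ k : Fin n, if h' : (k : ℕ) < c then f ⟨k, h'⟩ else 0) = ∑ i : Fin c, f i := by
  have h1 : (∑ k : Fin n, if h' : (k : ℕ) < c then f ⟨k, h'⟩ else 0)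
      = ∑ k ∈ Finset.range n, (if h' : k < c then f ⟨k, h'⟩ else 0) :=
    Fin.sum_univ_eq_sum_range (fun k => if h' : k < c then f ⟨k, h'⟩ else 0) n
  have h2 : (∑ i : Fin c, f i)
      = ∑ k ∈ Finset.range c, (if h' : k < c then f ⟨k, h'⟩ else 0) := by
    rw [← Fin.sum_univ_eq_sum_range (fun k => if h' : k < c then f ⟨k, h'⟩ else 0) c]
    exact Finset.sum_congr rfl fun k _ => by simp [k.isLt]
  rw [h1, h2]
  exact (Finset.sum_subset (Finset.range_subset_range.2 h) (fun i _ hi => by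
    simp only [Finset.mem_range] at hi
    rw [dif_neg hi])).symm

private lemma sum_orderIso {P : ℕ} (S : Finset (Fin P)) (H : Fin P → ℝ)
    (hH : ∀ j ∉ S, H j = 0) :
    (∑ i : Fin S.card, H (S.orderIsoOfFin rfl i)) = ∑ j, H j := by
  have h1 : (∑ i : Fin S.card, H (S.orderIsoOfFin rfl i))
      = ∑ j : {x // x ∈ S}, H j :=
    Equiv.sum_comp (S.orderIsoOfFin rfl).toEquiv (fun j => H j)
  rw [h1, Finset.sum_coe_sort S H]
  exact Finset.sum_subset (Finset.subset_univ S) (fun j _ hj => hH j hj)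


private lemma sparsify_step {P N : ℕ} (A : Fin N → Fin P → ℝ) :
    ∀ (k : ℕ) (v : Fin P → ℝ),
      (Finset.univ.filter fun j => v j ≠ 0).card ≤ k →
      ∃ w : Fin P → ℝ, (∀ i, ∑ j, A i j * w j = ∑ j, A i j * v j) ∧
        (∑ j, |w j|) ≤ ∑ j, |v j| ∧
        (Finset.univ.filter fun j => w j ≠ 0).card ≤ N := by
  intro k
  induction k with
  | zero =>
    intro v hv
    exact ⟨v, fun i => rfl, le_rfl, le_trans (Nat.le_of_eq (Nat.le_zero.mp hv)) (Nat.zero_le N)⟩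
  | succ k ih =>
    intro v hv
    set S := (Finset.univ.filter fun j => v j ≠ 0) with hS
    by_cases hle : S.card ≤ N
    · exact ⟨v, fun i => rfl, le_rfl, hle⟩
    push_neg at hle
    -- find a kernel vector u supported in S
    have hnotLI : ¬ LinearIndependent ℝ (fun j : {x // x ∈ S} => fun i => A i j) := by
      intro hLI
      have := hLI.fintype_card_le_finrank
      simp [Module.finrank_pi] at this
      omega
    obtain ⟨c, hc0, j₀, hj₀⟩ := Fintype.not_linearIndependent_iff.mp hnotLI
    -- two candidate directions
    obtain ⟨u, hu0, husupp, hAu, hs⟩ :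
        ∃ u : Fin P → ℝ, u ≠ 0 ∧ (∀ j ∉ S, u j = 0) ∧
          (∀ i, ∑ j, A i j * u j = 0) ∧
          (∑ j, (if 0 ≤ v j then (1:ℝ) else -1) * u j) ≤ 0 := by
      set u : Fin P → ℝ := fun j => if h : j ∈ S then c ⟨j, h⟩ else 0 with hu
      have husupp : ∀ j ∉ S, u j = 0 := fun j hj => by simp [hu, hj]
      have hune : u ≠ 0 := by
        intro h
        apply hj₀
        have := congrFun h j₀
        simpa [hu, j₀.2] using this
      have hAu : ∀ i, ∑ j, A i j * u j = 0 := by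
        intro i
        have h1 : ∑ j, A i j * u j = ∑ j ∈ S, A i j * u j :=
          (Finset.sum_subset (Finset.subset_univ S)
            (fun j _ hj => by rw [husupp j hj, mul_zero])).symm
        have h2 : ∑ j ∈ S, A i j * u j = ∑ j ∈ S.attach, A i (↑j) * u (↑j) :=
          (Finset.sum_attach S (fun j => A i j * u j)).symm
        have h3 : ∀ j : {x // x ∈ S}, u ↑j = c j := fun j => by simp [hu, j.2]
        have h4 := congrFun hc0 i
        simp only [Finset.sum_apply, Pi.smul_apply, smul_eq_mul, Pi.zero_apply] at h4
        rw [h1, h2]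
        rw [Finset.sum_congr rfl (fun j _ => by rw [h3 j, mul_comm])]
        exact h4
      rcases le_total (∑ j, (if 0 ≤ v j then (1:ℝ) else -1) * u j) 0 with h | h
      · exact ⟨u, hune, husupp, hAu, h⟩
      · refine ⟨-u, neg_ne_zero.mpr hune, fun j hj => by simp [husupp j hj],
          fun i => by simp only [Pi.neg_apply, mul_neg, Finset.sum_neg_distrib, hAu i, neg_zero], ?_⟩
        have : (∑ j, (if 0 ≤ v j then (1:ℝ) else -1) * (-u) j)
            = -(∑ j, (if 0 ≤ v j then (1:ℝ) else -1) * u j) := by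
          simp [mul_neg, Finset.sum_neg_distrib]
        rw [this]; linarith
    set sg : Fin P → ℝ := fun j => if 0 ≤ v j then (1:ℝ) else -1 with hsg
    have hsupport : ∀ j, u j ≠ 0 → v j ≠ 0 := by
      intro j hj
      by_contra hvj
      exact hj (husupp j (by simp [hS, hvj]))
    -- there is a coordinate moving toward zero
    have hT : ∃ j, sg j * u j < 0 := by
      by_contra hcon
      push_neg at hcon
      obtain ⟨j₁, hj₁⟩ : ∃ j, u j ≠ 0 := by
        by_contra hall; push_neg at hall; exact hu0 (funext hall)
      have hpos : 0 < ∑ j, sg j * u j := by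
        apply Finset.sum_pos' (fun j _ => hcon j)
        refine ⟨j₁, Finset.mem_univ _, lt_of_le_of_ne (hcon j₁) ?_⟩
        intro h
        apply hj₁
        have : sg j₁ ≠ 0 := by
          by_cases h0 : 0 ≤ v j₁ <;> simp [hsg, h0]
        exact (mul_eq_zero.mp h.symm).resolve_left this
      linarith
    set T := Finset.univ.filter (fun j => sg j * u j < 0) with hTdef
    have hTne : T.Nonempty := by
      obtain ⟨j, hj⟩ := hT
      exact ⟨j, by simp [hTdef, hj]⟩
    set t := T.inf' hTne (fun j => -(v j) / (u j)) with ht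
    -- basic signs per coordinate
    have hkey : ∀ j ∈ T, 0 < -(v j) / (u j) := by
      intro j hj
      simp only [hTdef, Finset.mem_filter] at hj
      have hj' := hj.2
      have huj : u j ≠ 0 := by
        intro h; rw [h, mul_zero] at hj'; exact lt_irrefl 0 hj'
      have hvj := hsupport j huj
      by_cases h0 : 0 ≤ v j
      · have hvpos : 0 < v j := lt_of_le_of_ne h0 (Ne.symm hvj)
        have huneg : u j < 0 := by
          simp only [hsg, if_pos h0, one_mul] at hj'; exact hj'
        rw [show -(v j) / (u j) = v j / (-(u j)) by rw [div_neg, neg_div]]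
        exact div_pos hvpos (by linarith)
      · push_neg at h0
        have hupos : 0 < u j := by
          simp only [hsg, if_neg (not_le.mpr h0), neg_one_mul, neg_neg] at hj'
          linarith
        exact div_pos (by linarith) hupos
    have htpos : 0 < t := by
      rw [ht, Finset.lt_inf'_iff]
      exact hkey
    -- pointwise identity |v j + t * u j| = |v j| + t * (sg j * u j)
    have habs : ∀ j, |v j + t * u j| = |v j| + t * (sg j * u j) := by
      intro j
      by_cases huj : u j = 0
      · simp [huj]
      have hvj := hsupport j huj
      by_cases hjT : sg j * u j < 0
      · have htle : t ≤ -(v j) / (u j) :=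
          Finset.inf'_le _ (by simp [hTdef, hjT])
        by_cases h0 : 0 ≤ v j
        · have hvpos : 0 < v j := lt_of_le_of_ne h0 (Ne.symm hvj)
          have huneg : u j < 0 := by
            simp only [hsg, if_pos h0, one_mul] at hjT; exact hjT
          have h1 : t ≤ v j / (-(u j)) := by
            rw [div_neg, ← neg_div]; exact htle
          have h2 : t * (-(u j)) ≤ v j := (le_div_iff₀ (by linarith)).mp h1
          rw [abs_of_nonneg (by linarith : (0:ℝ) ≤ v j + t * u j),
            abs_of_pos hvpos, hsg]
          simp only [if_pos h0]; ring
        · push_neg at h0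
          have hupos : 0 < u j := by
            simp only [hsg, if_neg (not_le.mpr h0), neg_one_mul] at hjT
            linarith
          have h2 : t * u j ≤ -(v j) := (le_div_iff₀ hupos).mp htle
          rw [abs_of_nonpos (by linarith : v j + t * u j ≤ 0),
            abs_of_neg h0, hsg]
          simp only [if_neg (not_le.mpr h0)]; ring
      · push_neg at hjT
        have hne : sg j * u j ≠ 0 := by
          intro h
          rcases mul_eq_zero.mp h with h' | h'
          · by_cases h0 : 0 ≤ v j <;> simp [hsg, h0] at h'
          · exact huj h'
        have hjpos : 0 < sg j * u j := lt_of_le_of_ne hjT (Ne.symm hne)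
        by_cases h0 : 0 ≤ v j
        · have hvpos : 0 < v j := lt_of_le_of_ne h0 (Ne.symm hvj)
          have hupos : 0 < u j := by
            simp only [hsg, if_pos h0, one_mul] at hjpos; exact hjpos
          rw [abs_of_nonneg (by nlinarith : (0:ℝ) ≤ v j + t * u j),
            abs_of_pos hvpos, hsg]
          simp only [if_pos h0]; ring
        · push_neg at h0
          have huneg : u j < 0 := by
            simp only [hsg, if_neg (not_le.mpr h0), neg_one_mul] at hjpos
            linarith
          rw [abs_of_nonpos (by nlinarith : v j + t * u j ≤ 0),
            abs_of_neg h0, hsg]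
          simp only [if_neg (not_le.mpr h0)]; ring
    -- the minimizing coordinate vanishes
    obtain ⟨j₂, hj₂T, hj₂⟩ := Finset.exists_mem_eq_inf' hTne (fun j => -(v j) / (u j))
    have huj₂ : u j₂ ≠ 0 := by
      simp only [hTdef, Finset.mem_filter] at hj₂T
      intro h; rw [h, mul_zero] at hj₂T; exact lt_irrefl 0 hj₂T.2
    have hvj₂ : v j₂ ≠ 0 := hsupport j₂ huj₂
    have hvanish : v j₂ + t * u j₂ = 0 := by
      rw [ht, hj₂]
      field_simp
      ring
    -- new vector
    set v' : Fin P → ℝ := fun j => v j + t * u j with hv'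
    have hsub : (Finset.univ.filter fun j => v' j ≠ 0) ⊆ S.erase j₂ := by
      intro j hj
      simp only [Finset.mem_filter, hv'] at hj
      rw [Finset.mem_erase]
      constructor
      · intro h; rw [h] at hj; exact hj.2 hvanish
      · simp only [hS, Finset.mem_filter]
        refine ⟨Finset.mem_univ _, ?_⟩
        intro h
        have huj : u j = 0 := husupp j (by simp [hS, h])
        rw [h, huj] at hj
        simp at hj
    have hcard' : (Finset.univ.filter fun j => v' j ≠ 0).card ≤ k := by
      have h1 := Finset.card_le_card hsub
      have h2 : (S.erase j₂).card = S.card - 1 :=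
        Finset.card_erase_of_mem (by simp [hS, hvj₂])
      omega
    obtain ⟨w, hw1, hw2, hw3⟩ := ih v' hcard'
    refine ⟨w, ?_, ?_, hw3⟩
    · intro i
      rw [hw1 i]
      have : ∑ j, A i j * v' j = ∑ j, A i j * v j + t * ∑ j, A i j * u j := by
        rw [Finset.mul_sum, ← Finset.sum_add_distrib]
        exact Finset.sum_congr rfl fun j _ => by simp only [hv']; ring
      rw [this, hAu i, mul_zero, add_zero]
    · refine le_trans hw2 ?_
      have : ∑ j, |v' j| = ∑ j, |v j| + t * ∑ j, sg j * u j := by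
        rw [Finset.mul_sum, ← Finset.sum_add_distrib]
        exact Finset.sum_congr rfl fun j _ => by rw [habs j]
      rw [this]
      nlinarith


open scoped InnerProductSpace

/-- Sparsification of a global minimizer of the ℓ¹-regularized regression
problem with P > N neurons: there is a configuration with at most N active
neurons and the same (P-neuron) objective value, and hence a minimizer of the
problem with exactly N neurons achieving this value. -/
theorem sparsification_of_global_minimizer {d P N : ℕ} (hPN : N < P)
    (σ : ℝ → ℝ) (ℓ : ℝ → ℝ) (lam : ℝ) (hlam : 0 < lam)
    (Ω : Set (EuclideanSpace ℝ (Fin d) × ℝ)) (hΩ : Ω.Nonempty)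
    (x : Fin N → EuclideanSpace ℝ (Fin d)) (y : Fin N → ℝ)
    (ω : Fin P → ℝ) (a : Fin P → EuclideanSpace ℝ (Fin d)) (b : Fin P → ℝ)
    (hmem : ∀ j, (a j, b j) ∈ Ω)
    (J : (Q : ℕ) → (Fin Q → ℝ) → (Fin Q → EuclideanSpace ℝ (Fin d)) →
      (Fin Q → ℝ) → ℝ)
    (hJ : ∀ (Q : ℕ) (ω' : Fin Q → ℝ) (a' : Fin Q → EuclideanSpace ℝ (Fin d))
      (b' : Fin Q → ℝ), J Q ω' a' b' =
        ∑ j, |ω' j| +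
          (lam / N) * ∑ i, ℓ ((∑ j, ω' j * σ (⟪a' j, x i⟫_ℝ + b' j)) - y i))
    (hopt : ∀ (ω' : Fin P → ℝ) (a' : Fin P → EuclideanSpace ℝ (Fin d))
      (b' : Fin P → ℝ), (∀ j, (a' j, b' j) ∈ Ω) → J P ω a b ≤ J P ω' a' b') :
    (∃ (ωP : Fin P → ℝ) (aP : Fin P → EuclideanSpace ℝ (Fin d))
        (bP : Fin P → ℝ),
      (∀ j, (aP j, bP j) ∈ Ω) ∧
      (Finset.univ.filter fun j => ωP j ≠ 0).card ≤ N ∧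
      J P ωP aP bP = J P ω a b) ∧
    ∃ (ω₀ : Fin N → ℝ) (a₀ : Fin N → EuclideanSpace ℝ (Fin d))
        (b₀ : Fin N → ℝ),
      (∀ j, (a₀ j, b₀ j) ∈ Ω) ∧
      J N ω₀ a₀ b₀ = J P ω a b ∧
      ∀ (ω' : Fin N → ℝ) (a' : Fin N → EuclideanSpace ℝ (Fin d))
        (b' : Fin N → ℝ), (∀ j, (a' j, b' j) ∈ Ω) →
          J N ω₀ a₀ b₀ ≤ J N ω' a' b' := by
  classical
  obtain ⟨p, hp⟩ := hΩ
  set A : Fin N → Fin P → ℝ := fun i j => σ (⟪a j, x i⟫_ℝ + b j) with hA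
  obtain ⟨w, hw1, hw2, hw3⟩ := sparsify_step A
    ((Finset.univ.filter fun j => ω j ≠ 0).card) ω le_rfl
  -- value comparison
  have hout : ∀ i, (∑ j, w j * σ (⟪a j, x i⟫_ℝ + b j))
      = ∑ j, ω j * σ (⟪a j, x i⟫_ℝ + b j) := by
    intro i
    have := hw1 i
    simpa [hA, mul_comm] using this
  have hJle : J P w a b ≤ J P ω a b := by
    rw [hJ, hJ]
    have : (∑ i, ℓ ((∑ j, w j * σ (⟪a j, x i⟫_ℝ + b j)) - y i))
        = ∑ i, ℓ ((∑ j, ω j * σ (⟪a j, x i⟫_ℝ + b j)) - y i) :=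
      Finset.sum_congr rfl fun i _ => by rw [hout i]
    rw [this]
    exact add_le_add_left hw2 _
  have hJeq : J P w a b = J P ω a b := le_antisymm hJle (hopt w a b hmem)
  refine ⟨⟨w, a, b, hmem, hw3, hJeq⟩, ?_⟩
  -- compress to N neurons
  set S : Finset (Fin P) := Finset.univ.filter fun j => w j ≠ 0 with hSdef
  have hm : S.card ≤ N := hw3
  set e : Fin S.card → Fin P := fun i => ((S.orderIsoOfFin rfl) i : Fin P) with he
  set ω₀ : Fin N → ℝ := fun k => if h : (k : ℕ) < S.card then w (e ⟨k, h⟩) else 0 with hω₀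
  set a₀ : Fin N → EuclideanSpace ℝ (Fin d) :=
    fun k => if h : (k : ℕ) < S.card then a (e ⟨k, h⟩) else p.1 with ha₀
  set b₀ : Fin N → ℝ := fun k => if h : (k : ℕ) < S.card then b (e ⟨k, h⟩) else p.2 with hb₀
  have hmem₀ : ∀ k, (a₀ k, b₀ k) ∈ Ω := by
    intro k
    by_cases h : (k : ℕ) < S.card
    · simp only [ha₀, hb₀, dif_pos h]; exact hmem _
    · simp only [ha₀, hb₀, dif_neg h]; exact hp
  have hwzero : ∀ j ∉ S, w j = 0 := by
    intro j hj
    by_contra h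
    exact hj (by simp [hSdef, h])
  -- |ω₀| sum
  have habs₀ : ∑ k, |ω₀ k| = ∑ j, |w j| := by
    have h1 : ∀ k : Fin N, |ω₀ k|
        = if h : (k : ℕ) < S.card then |w (e ⟨k, h⟩)| else 0 := by
      intro k
      by_cases h : (k : ℕ) < S.card <;> simp [hω₀, h]
    exact (Finset.sum_congr rfl fun k _ => h1 k).trans
      ((sum_extend hm fun i => |w (e i)|).trans
        (sum_orderIso S (fun j => |w j|) (fun j hj => by show |w j| = 0; rw [hwzero j hj, abs_zero])))
  -- output sums
  have hout₀ : ∀ i, (∑ k, ω₀ k * σ (⟪a₀ k, x i⟫_ℝ + b₀ k))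
      = ∑ j, w j * σ (⟪a j, x i⟫_ℝ + b j) := by
    intro i
    have h1 : ∀ k : Fin N, ω₀ k * σ (⟪a₀ k, x i⟫_ℝ + b₀ k)
        = if h : (k : ℕ) < S.card
          then w (e ⟨k, h⟩) * σ (⟪a (e ⟨k, h⟩), x i⟫_ℝ + b (e ⟨k, h⟩)) else 0 := by
      intro k
      by_cases h : (k : ℕ) < S.card <;> simp [hω₀, ha₀, hb₀, h]
    exact (Finset.sum_congr rfl fun k _ => h1 k).trans
      ((sum_extend hm fun i' => w (e i') * σ (⟪a (e i'), x i⟫_ℝ + b (e i'))).trans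
        (sum_orderIso S (fun j => w j * σ (⟪a j, x i⟫_ℝ + b j))
          (fun j hj => by show w j * _ = 0; rw [hwzero j hj, zero_mul])))
  have hJ₀ : J N ω₀ a₀ b₀ = J P w a b := by
    rw [hJ, hJ, habs₀]
    congr 1
    congr 1
    exact Finset.sum_congr rfl fun i _ => by rw [hout₀ i]
  refine ⟨ω₀, a₀, b₀, hmem₀, hJ₀.trans hJeq, ?_⟩
  -- minimality among N-neuron configurations
  intro ω' a' b' hmem'
  set ω'' : Fin P → ℝ := fun j => if h : (j : ℕ) < N then ω' ⟨j, h⟩ else 0 with hω''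
  set a'' : Fin P → EuclideanSpace ℝ (Fin d) :=
    fun j => if h : (j : ℕ) < N then a' ⟨j, h⟩ else p.1 with ha''
  set b'' : Fin P → ℝ := fun j => if h : (j : ℕ) < N then b' ⟨j, h⟩ else p.2 with hb''
  have hmem'' : ∀ j, (a'' j, b'' j) ∈ Ω := by
    intro j
    by_cases h : (j : ℕ) < N
    · simp only [ha'', hb'', dif_pos h]; exact hmem' _
    · simp only [ha'', hb'', dif_neg h]; exact hp
  have hJ'' : J P ω'' a'' b'' = J N ω' a' b' := by
    rw [hJ, hJ]
    have habs'' : ∑ j, |ω'' j| = ∑ k, |ω' k| := by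
      have h1 : ∀ j : Fin P, |ω'' j|
          = if h : (j : ℕ) < N then |ω' ⟨j, h⟩| else 0 := by
        intro j
        by_cases h : (j : ℕ) < N <;> simp [hω'', h]
      exact (Finset.sum_congr rfl fun j _ => h1 j).trans
        (sum_extend hPN.le fun k => |ω' k|)
    have hout'' : ∀ i, (∑ j, ω'' j * σ (⟪a'' j, x i⟫_ℝ + b'' j))
        = ∑ k, ω' k * σ (⟪a' k, x i⟫_ℝ + b' k) := by
      intro i
      have h1 : ∀ j : Fin P, ω'' j * σ (⟪a'' j, x i⟫_ℝ + b'' j)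
          = if h : (j : ℕ) < N
            then ω' ⟨j, h⟩ * σ (⟪a' ⟨j, h⟩, x i⟫_ℝ + b' ⟨j, h⟩) else 0 := by
        intro j
        by_cases h : (j : ℕ) < N <;> simp [hω'', ha'', hb'', h]
      exact (Finset.sum_congr rfl fun j _ => h1 j).trans
        (sum_extend hPN.le fun k => ω' k * σ (⟪a' k, x i⟫_ℝ + b' k))
    rw [habs'']
    congr 1
    congr 1
    exact Finset.sum_congr rfl fun i _ => by rw [hout'' i]
  calc J N ω₀ a₀ b₀ = J P ω a b := hJ₀.trans hJeq
    _ ≤ J P ω'' a'' b'' := hopt ω'' a'' b'' hmem''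
    _ = J N ω' a' b' := hJ''
end

section
/- Define V(ε) as the optimal value of the relaxed approximate representation problem: inf{‖μ‖_TV : μ ∈ M(Ω), |∫_Ω σ(⟨a,x_i⟩+b)dμ − y_i| ≤ ε for all i}, for ε ≥ 0. Under Assumption 1, V equals the dual value sup{⟨Y,p⟩ − ε‖p‖₁ : p ∈ ℝ^N, ‖∑_i p_i σ(⟨a,·⟩ x_i + ·)‖_{C(Ω)} ≤ 1}, and in particular V : [0,∞) → ℝ is convex and lower semicontinuous, being a supremum over p in a fixed compact convex set Z of affine functions ε ↦ ⟨Y,p⟩ − ε‖p‖₁. -/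
open scoped InnerProductSpace


open MeasureTheory in
lemma exists_generic {d N : ℕ} (x : Fin N → EuclideanSpace ℝ (Fin d))
    (hx : Function.Injective x) :
    ∃ a : EuclideanSpace ℝ (Fin d), Function.Injective fun i => ⟪a, x i⟫_ℝ := by
  by_contra h
  push_neg at h
  have hcover : (Set.univ : Set (EuclideanSpace ℝ (Fin d))) ⊆
      ⋃ q ∈ {q : Fin N × Fin N | q.1 ≠ q.2},
        ((LinearMap.ker (innerSL ℝ (x q.1 - x q.2) : EuclideanSpace ℝ (Fin d) →ₗ[ℝ] ℝ) : Submodule ℝ (EuclideanSpace ℝ (Fin d))) : Set (EuclideanSpace ℝ (Fin d))) := by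
    intro a _
    obtain ⟨i, j, hij, hne⟩ : ∃ i j, ⟪a, x i⟫_ℝ = ⟪a, x j⟫_ℝ ∧ i ≠ j := by
      have h' := h a
      rw [Function.Injective] at h'
      push_neg at h'
      obtain ⟨i, j, h1, h2⟩ := h'
      exact ⟨i, j, h1, h2⟩
    refine Set.mem_biUnion (show ((i, j) : Fin N × Fin N) ∈ _ from hne) ?_
    simp only [SetLike.mem_coe, LinearMap.mem_ker, ContinuousLinearMap.coe_coe, innerSL_apply_apply, inner_sub_left]
    have e1 := real_inner_comm a (x i)
    have e2 := real_inner_comm a (x j)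
    linarith
  have hnull : (volume : Measure (EuclideanSpace ℝ (Fin d)))
      (⋃ q ∈ {q : Fin N × Fin N | q.1 ≠ q.2},
        ((LinearMap.ker (innerSL ℝ (x q.1 - x q.2) : EuclideanSpace ℝ (Fin d) →ₗ[ℝ] ℝ) : Submodule ℝ (EuclideanSpace ℝ (Fin d))) : Set (EuclideanSpace ℝ (Fin d)))) = 0 := by
    refine (measure_biUnion_null_iff (Set.toFinite _).countable).2 ?_
    intro q hq
    refine Measure.addHaar_submodule _ _ ?_
    intro htop
    have hm : x q.1 - x q.2 ∈ LinearMap.ker (innerSL ℝ (x q.1 - x q.2) : EuclideanSpace ℝ (Fin d) →ₗ[ℝ] ℝ) :=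
      htop ▸ Submodule.mem_top
    rw [LinearMap.mem_ker] at hm
    simp only [ContinuousLinearMap.coe_coe, innerSL_apply_apply] at hm
    have hne0 : x q.1 - x q.2 ≠ 0 := sub_ne_zero.2 (fun he => hq (hx he))
    exact hne0 (inner_self_eq_zero.mp hm)
  have h0 : (volume : Measure (EuclideanSpace ℝ (Fin d))) Set.univ = 0 :=
    measure_mono_null hcover hnull
  have hpos : 0 < (volume : Measure (EuclideanSpace ℝ (Fin d))) Set.univ :=
    isOpen_univ.measure_pos _ ⟨0, trivial⟩
  simp [h0] at hpos

lemma lin_indep_pointwise {d N : ℕ}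
    (σ : ℝ → ℝ) (hσ0 : ∀ t : ℝ, t ≤ 0 → σ t = 0) (hσp : ∀ t : ℝ, 0 < t → 0 < σ t)
    (Ω : Set (EuclideanSpace ℝ (Fin d) × ℝ))
    (r : ℝ) (hr : 0 < r)
    (hball : Metric.ball (0 : EuclideanSpace ℝ (Fin d) × ℝ) r ⊆ Ω)
    (x : Fin N → EuclideanSpace ℝ (Fin d)) (hx : Function.Injective x)
    (p : Fin N → ℝ)
    (hz : ∀ θ : ↥Ω, ∑ i, p i *
      σ (⟪(θ : EuclideanSpace ℝ (Fin d) × ℝ).1, x i⟫_ℝ +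
        (θ : EuclideanSpace ℝ (Fin d) × ℝ).2) = 0) :
    p = 0 := by
  by_contra hp
  obtain ⟨i₀, hi₀⟩ := Function.ne_iff.1 hp
  obtain ⟨a, hainj⟩ := exists_generic x hx
  set s : Fin N → ℝ := fun i => ⟪a, x i⟫_ℝ with hs
  have hsupp : (Finset.univ.filter fun i => p i ≠ 0).Nonempty :=
    ⟨i₀, by simpa using hi₀⟩
  obtain ⟨i₁, hi₁mem, hmax⟩ :=
    (Finset.univ.filter fun i => p i ≠ 0).exists_max_image s hsupp
  have hpi₁ : p i₁ ≠ 0 := by simpa using hi₁mem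
  set G : Finset (Fin N) := Finset.univ.filter fun j => s j < s i₁ with hG
  set δ : ℝ := if h : G.Nonempty then G.inf' h (fun j => s i₁ - s j) else 1 with hδ
  have hδpos : 0 < δ := by
    rw [hδ]
    split_ifs with h
    · rw [Finset.lt_inf'_iff]
      intro j hj
      have : s j < s i₁ := by simpa [hG] using hj
      linarith
    · norm_num
  have hδle : ∀ j, s j < s i₁ → δ ≤ s i₁ - s j := by
    intro j hj
    have hjG : j ∈ G := by simp [hG, hj]
    rw [hδ]
    rw [dif_pos ⟨j, hjG⟩]
    exact Finset.inf'_le _ hjG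
  set M : ℝ := ‖a‖ + |δ - s i₁| + 1 with hM
  have hMpos : 0 < M := by positivity
  set lam : ℝ := r / (2 * M) with hlam
  have hlampos : 0 < lam := by positivity
  set θv : EuclideanSpace ℝ (Fin d) × ℝ := (lam • a, lam * (δ - s i₁)) with hθv
  have hnorm : ‖θv‖ < r := by
    have h1 : ‖lam • a‖ = lam * ‖a‖ := by
      rw [norm_smul, Real.norm_eq_abs, abs_of_pos hlampos]
    have h2 : ‖lam * (δ - s i₁)‖ = lam * |δ - s i₁| := by
      rw [Real.norm_eq_abs, abs_mul, abs_of_pos hlampos]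
    have hle1 : lam * ‖a‖ ≤ lam * M := by
      apply mul_le_mul_of_nonneg_left _ hlampos.le
      rw [hM]; have := abs_nonneg (δ - s i₁); linarith
    have hle2 : lam * |δ - s i₁| ≤ lam * M := by
      apply mul_le_mul_of_nonneg_left _ hlampos.le
      rw [hM]; have := norm_nonneg a; linarith
    have hlM : lam * M = r / 2 := by
      rw [hlam]
      field_simp
    have hmax' : ‖θv‖ = max ‖lam • a‖ ‖lam * (δ - s i₁)‖ := rfl
    rw [hmax', h1, h2]
    have hr2 : r / 2 < r := by linarith
    exact max_lt (lt_of_le_of_lt (hle1.trans_eq hlM) hr2)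
      (lt_of_le_of_lt (hle2.trans_eq hlM) hr2)
  have hmem : θv ∈ Ω := hball (mem_ball_zero_iff.2 hnorm)
  have h0 := hz ⟨θv, hmem⟩
  have hterm : ∀ i : Fin N,
      p i * σ (⟪(θv.1 : EuclideanSpace ℝ (Fin d)), x i⟫_ℝ + θv.2)
        = p i * σ (lam * (s i - s i₁ + δ)) := by
    intro i
    have h1 : ⟪(θv.1 : EuclideanSpace ℝ (Fin d)), x i⟫_ℝ = lam * s i :=
      real_inner_smul_left a (x i) lam
    have h2 : θv.2 = lam * (δ - s i₁) := rfl
    rw [h1, h2]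
    congr 1
    ring_nf
  rw [show ((⟨θv, hmem⟩ : ↥Ω) : EuclideanSpace ℝ (Fin d) × ℝ) = θv from rfl] at h0
  rw [Finset.sum_congr rfl (fun i _ => hterm i)] at h0
  rw [Finset.sum_eq_single i₁] at h0
  · have hpos : 0 < σ (lam * (s i₁ - s i₁ + δ)) := by
      apply hσp
      have : s i₁ - s i₁ + δ = δ := by ring
      rw [this]
      positivity
    exact hpi₁ (by
      rcases mul_eq_zero.1 h0 with h | h
      · exact h
      · exact absurd h hpos.ne')
  · intro j _ hj
    by_cases hpj : p j = 0
    · rw [hpj, zero_mul]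
    · have hjmem : j ∈ Finset.univ.filter fun i => p i ≠ 0 := by simpa using hpj
      have hle : s j ≤ s i₁ := hmax j hjmem
      have hne : s j ≠ s i₁ := fun he => hj (hainj he)
      have hlt : s j < s i₁ := lt_of_le_of_ne hle hne
      have : σ (lam * (s j - s i₁ + δ)) = 0 := by
        apply hσ0
        have h1 : s j - s i₁ + δ ≤ 0 := by have := hδle j hlt; linarith
        exact mul_nonpos_of_nonneg_of_nonpos hlampos.le h1
      rw [this, mul_zero]
  · intro h; exact absurd (Finset.mem_univ i₁) h

lemma exists_exact {N : ℕ} {Θ : Type*} [TopologicalSpace Θ] [CompactSpace Θ]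
    (φ : Fin N → C(Θ, ℝ)) (Y : Fin N → ℝ)
    (hli : ∀ p : Fin N → ℝ, (∀ θ : Θ, ∑ i, p i * φ i θ = 0) → p = 0) :
    ∃ μ : C(Θ, ℝ) →L[ℝ] ℝ, ∀ i, μ (φ i) = Y i := by
  classical
  set E := EuclideanSpace ℝ (Fin N)
  let e : E ≃L[ℝ] (Fin N → ℝ) := EuclideanSpace.equiv (Fin N) ℝ
  let v : Θ → E := fun θ => e.symm (fun i => φ i θ)
  set M : Submodule ℝ E := Submodule.span ℝ (Set.range v) with hM
  have htop : M = ⊤ := by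
    rw [← Submodule.orthogonal_eq_bot_iff]
    rw [Submodule.eq_bot_iff]
    intro q hq
    have hq' : ∀ θ : Θ, ⟪v θ, q⟫_ℝ = 0 := by
      intro θ
      exact hq (v θ) (Submodule.subset_span (Set.mem_range_self θ))
    have hzero : (fun i => q i) = (0 : Fin N → ℝ) := by
      apply hli
      intro θ
      have := hq' θ
      rw [PiLp.inner_apply] at this
      simp [v, e, mul_comm] at this
      exact this
    ext i
    exact congrFun hzero i
  have hY : (e.symm Y : E) ∈ M := htop ▸ Submodule.mem_top
  rw [hM, Submodule.mem_span_set'] at hY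
  obtain ⟨n, f, g, hfg⟩ := hY
  choose θs hθs using fun i => (g i).2
  refine ⟨∑ i, f i • ContinuousMap.evalCLM ℝ (θs i), ?_⟩
  intro j
  have happ : (∑ i, f i • ContinuousMap.evalCLM (M := ℝ) ℝ (θs i)) (φ j)
      = ∑ i, f i * φ j (θs i) := by
    simp [ContinuousLinearMap.sum_apply, ContinuousMap.evalCLM]
  rw [happ]
  have := congrArg e hfg
  rw [map_sum] at this
  have hYj := congrFun this j
  simp only [map_smul] at hYj
  have h1 : ∀ i, (e ((g i : E))) = fun k => φ k (θs i) := by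
    intro i
    rw [← hθs i]
    rfl
  rw [Finset.sum_apply] at hYj
  have h2 : ∀ i, (f i • e ((g i : E))) j = f i * φ j (θs i) := by
    intro i
    rw [h1 i]
    simp
  rw [Finset.sum_congr rfl (fun i _ => h2 i)] at hYj
  have h3 : e (e.symm Y) = Y := e.apply_symm_apply Y
  rw [h3] at hYj
  exact hYj

lemma sign_mul_self_eq_abs (y : ℝ) : y * Real.sign y = |y| := by
  rcases lt_trichotomy y 0 with h | h | h
  · rw [Real.sign_of_neg h, abs_of_neg h]; ring
  · simp [h]
  · rw [Real.sign_of_pos h, abs_of_pos h]; ring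

lemma abs_sign_le_one (y : ℝ) : |Real.sign y| ≤ 1 := by
  rcases lt_trichotomy y 0 with h | h | h
  · rw [Real.sign_of_neg h]; norm_num
  · simp [h]
  · rw [Real.sign_of_pos h]; norm_num

lemma strong_duality_step {N : ℕ} {Θ : Type*} [TopologicalSpace Θ] [CompactSpace Θ]
    (φ : Fin N → C(Θ, ℝ)) (Y : Fin N → ℝ)
    (hli' : ∀ p : Fin N → ℝ, ∑ i, p i • φ i = 0 → p = 0)
    (ε t : ℝ) (hε : 0 ≤ ε) (ht : 0 < t)
    (hlt : ∀ p : Fin N → ℝ, ‖∑ i, p i • φ i‖ ≤ 1 →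
        (∑ i, Y i * p i) - ε * ∑ i, |p i| < t) :
    ∃ μ : C(Θ, ℝ) →L[ℝ] ℝ, ‖μ‖ ≤ t ∧ ∀ i, |μ (φ i) - Y i| ≤ ε := by
  classical
  let E := EuclideanSpace ℝ (Fin N)
  let e : E ≃L[ℝ] (Fin N → ℝ) := EuclideanSpace.equiv (Fin N) ℝ
  let g : WeakDual ℝ C(Θ, ℝ) → E := fun μ => e.symm (fun i => μ (φ i))
  have hgc : Continuous g :=
    e.symm.continuous.comp (continuous_pi fun i => WeakDual.eval_continuous (φ i))
  set K : Set (WeakDual ℝ C(Θ, ℝ)) := WeakDual.toStrongDual ⁻¹' Metric.closedBall (0 : StrongDual ℝ C(Θ, ℝ)) t with hKdef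
  have hKc : IsCompact K := WeakDual.isCompact_closedBall (𝕜 := ℝ) (E := C(Θ, ℝ)) 0 t
  have hKmem : ∀ μ : WeakDual ℝ C(Θ, ℝ), μ ∈ K ↔ ‖WeakDual.toStrongDual μ‖ ≤ t := by
    intro μ
    simp [hKdef, Metric.mem_closedBall]
    rw [dist_zero_right (WeakDual.toStrongDual μ)]
  set A : Set E := g '' K with hAdef
  have hAc : IsCompact A := hKc.image hgc
  have hglin : ∀ (a b : ℝ) (μ₁ μ₂ : WeakDual ℝ C(Θ, ℝ)),
      g (a • μ₁ + b • μ₂) = a • g μ₁ + b • g μ₂ := by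
    intro a b μ₁ μ₂
    show e.symm _ = a • e.symm _ + b • e.symm _
    rw [← map_smul e.symm, ← map_smul e.symm, ← map_add e.symm]
    rfl
  have hAconv : Convex ℝ A := by
    rintro u ⟨μ₁, hμ₁, rfl⟩ w ⟨μ₂, hμ₂, rfl⟩ a b ha hb hab
    refine ⟨a • μ₁ + b • μ₂, ?_, (hglin a b μ₁ μ₂).symm⟩
    rw [hKmem] at hμ₁ hμ₂ ⊢
    rw [map_add, map_smul, map_smul]
    calc ‖a • WeakDual.toStrongDual μ₁ + b • WeakDual.toStrongDual μ₂‖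
        ≤ ‖a • WeakDual.toStrongDual μ₁‖ + ‖b • WeakDual.toStrongDual μ₂‖ := ContinuousLinearMap.opNorm_add_le _ _
      _ ≤ a * t + b * t := by
          have h1 := ContinuousLinearMap.opNorm_smul_le a (WeakDual.toStrongDual μ₁)
          have h2 := ContinuousLinearMap.opNorm_smul_le b (WeakDual.toStrongDual μ₂)
          rw [Real.norm_eq_abs, abs_of_nonneg ha] at h1
          rw [Real.norm_eq_abs, abs_of_nonneg hb] at h2
          nlinarith [mul_le_mul_of_nonneg_left hμ₁ ha, mul_le_mul_of_nonneg_left hμ₂ hb]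
      _ = t := by rw [← add_mul, hab, one_mul]
  set B : Set E := {z | ∀ i, |e z i - Y i| ≤ ε} with hBdef
  have hBcl : IsClosed B := by
    rw [hBdef, Set.setOf_forall]
    refine isClosed_iInter fun i => isClosed_le (Continuous.abs ?_) continuous_const
    exact ((continuous_apply i).comp e.continuous).sub continuous_const
  have hBconv : Convex ℝ B := by
    intro z₁ h₁ z₂ h₂ a b ha hb hab
    intro i
    have he : e (a • z₁ + b • z₂) i = a * e z₁ i + b * e z₂ i := by
      rw [map_add, map_smul, map_smul]
      simp [smul_eq_mul]
    rw [he]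
    have hY' : a * Y i + b * Y i = Y i := by rw [← add_mul, hab, one_mul]
    calc |a * e z₁ i + b * e z₂ i - Y i|
        = |a * (e z₁ i - Y i) + b * (e z₂ i - Y i)| := by
          congr 1
          linear_combination (Y i) * hab
      _ ≤ |a * (e z₁ i - Y i)| + |b * (e z₂ i - Y i)| := abs_add_le _ _
      _ = a * |e z₁ i - Y i| + b * |e z₂ i - Y i| := by
          rw [abs_mul, abs_mul, abs_of_nonneg ha, abs_of_nonneg hb]
      _ ≤ a * ε + b * ε := by gcongr; exact h₁ i; exact h₂ i
      _ = ε := by rw [← add_mul, hab, one_mul]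
  have hnd : ¬ Disjoint A B := by
    intro hdis
    obtain ⟨f, u, w, hfu, huw, hfw⟩ :=
      geometric_hahn_banach_compact_closed hAconv hAc hBconv hBcl hdis
    set p' : E := (InnerProductSpace.toDual ℝ E).symm f with hp'
    set p : Fin N → ℝ := e p' with hp
    have hfz : ∀ z : E, f z = ∑ i, p i * e z i := by
      intro z
      have h1 : ⟪p', z⟫_ℝ = f z := InnerProductSpace.toDual_symm_apply
      rw [← h1, PiLp.inner_apply]
      refine Finset.sum_congr rfl fun i _ => ?_
      exact mul_comm _ _
    set F : C(Θ, ℝ) := ∑ i, p i • φ i with hF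
    set c : ℝ := ‖F‖ with hc
    -- A side
    obtain ⟨G, hG1, hGF⟩ := exists_dual_vector'' ℝ F
    have hμ₁K : (WeakDual.toStrongDual.symm (t • G)) ∈ K := by
      rw [hKmem, LinearEquiv.apply_symm_apply]
      refine (ContinuousLinearMap.opNorm_smul_le t G).trans ?_
      rw [Real.norm_eq_abs, abs_of_pos ht]
      calc t * ‖G‖ ≤ t * 1 := by gcongr
        _ = t := mul_one t
    have htc : t * c < u := by
      have h2 := hfu _ ⟨_, hμ₁K, rfl⟩
      rw [hfz] at h2
      have h3 : ∀ i : Fin N,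
          e (g (WeakDual.toStrongDual.symm (t • G))) i = t * G (φ i) := by
        intro i
        show e (e.symm _) i = _
        rw [e.apply_symm_apply]
        rfl
      rw [Finset.sum_congr rfl (fun i _ => by rw [h3 i])] at h2
      have h4 : ∑ i, p i * (t * G (φ i)) = t * G F := by
        rw [hF, map_sum]
        rw [Finset.mul_sum]
        refine Finset.sum_congr rfl fun i _ => ?_
        rw [map_smul]
        simp only [smul_eq_mul]
        ring
      rw [h4, hGF] at h2
      exact h2
    -- B side
    set z₀ : E := e.symm (fun i => Y i - ε * Real.sign (p i)) with hz₀
    have hz₀B : z₀ ∈ B := by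
      intro i
      rw [hz₀, e.apply_symm_apply]
      simp only [sub_sub_cancel_left, abs_neg]
      rw [abs_mul, abs_of_nonneg hε]
      calc ε * |Real.sign (p i)| ≤ ε * 1 := by gcongr; exact abs_sign_le_one _
        _ = ε := mul_one ε
    have hwS := hfw z₀ hz₀B
    rw [hfz, hz₀] at hwS
    have h5 : ∑ i, p i * e (e.symm (fun i => Y i - ε * Real.sign (p i))) i
        = (∑ i, p i * Y i) - ε * ∑ i, |p i| := by
      rw [e.apply_symm_apply]
      rw [Finset.mul_sum, ← Finset.sum_sub_distrib]
      refine Finset.sum_congr rfl fun i _ => ?_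
      rw [← sign_mul_self_eq_abs]
      ring
    rw [h5] at hwS
    -- combine
    rcases (norm_nonneg F).eq_or_lt with hc0 | hcpos
    · have hF0 : F = 0 := by rwa [eq_comm, norm_eq_zero] at hc0
      rw [hF] at hF0
      have hp0 : p = 0 := hli' p hF0
      rw [hp0] at hwS
      simp at hwS
      have hz : t * c = 0 := by rw [hc, ← hc0, mul_zero]
      rw [hz] at htc
      linarith
    · set S : ℝ := (∑ i, p i * Y i) - ε * ∑ i, |p i| with hS
      have hcS : t * c < S := by linarith
      have hq1 : ‖∑ i, (c⁻¹ * p i) • φ i‖ ≤ 1 := by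
        have hsum : ∑ i, (c⁻¹ * p i) • φ i = c⁻¹ • F := by
          rw [hF, Finset.smul_sum]
          refine Finset.sum_congr rfl fun i _ => ?_
          rw [smul_smul]
        rw [hsum, norm_smul c⁻¹ F, Real.norm_eq_abs, abs_of_pos (inv_pos.2 hcpos), ← hc,
          inv_mul_cancel₀ hcpos.ne']
      have hval := hlt (fun i => c⁻¹ * p i) hq1
      have hval' : (∑ i, Y i * (c⁻¹ * p i)) - ε * ∑ i, |c⁻¹ * p i| = c⁻¹ * S := by
        have e1 : ∑ i, Y i * (c⁻¹ * p i) = c⁻¹ * ∑ i, p i * Y i := by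
          rw [Finset.mul_sum]
          exact Finset.sum_congr rfl fun i _ => by ring
        have e2 : ∑ i, |c⁻¹ * p i| = c⁻¹ * ∑ i, |p i| := by
          rw [Finset.mul_sum]
          refine Finset.sum_congr rfl fun i _ => ?_
          rw [abs_mul, abs_of_pos (inv_pos.2 hcpos)]
        rw [e1, e2, hS]
        ring
      rw [hval'] at hval
      have hgt : t < c⁻¹ * S := by
        have h6 : c⁻¹ * (t * c) < c⁻¹ * S := mul_lt_mul_of_pos_left hcS (inv_pos.2 hcpos)
        have h7 : c⁻¹ * (t * c) = t := by
          field_simp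
          exact div_self hcpos.ne'
        rw [h7] at h6
        exact h6
      linarith
  rw [Set.not_disjoint_iff] at hnd
  obtain ⟨z, ⟨μ, hμK, rfl⟩, hzB⟩ := hnd
  refine ⟨WeakDual.toStrongDual μ, (hKmem μ).1 hμK, ?_⟩
  intro i
  have h7 := hzB i
  have h8 : e (g μ) i = μ (φ i) := by
    show e (e.symm _) i = _
    rw [e.apply_symm_apply]
  rw [h8] at h7
  exact h7


/-- Strong duality and convexity/lower semicontinuity of the value function
ε ↦ V(ε) of the relaxed approximate representation problem, posed on the dual
of C(Ω, ℝ) (signed Radon measures with the total variation norm). -/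
theorem value_function_duality_convex_lsc {d N : ℕ} (hN : 1 ≤ N)
    (σ : ℝ → ℝ) (hσc : Continuous σ)
    (hσ0 : ∀ t : ℝ, t ≤ 0 → σ t = 0) (hσp : ∀ t : ℝ, 0 < t → 0 < σ t)
    (Ω : Set (EuclideanSpace ℝ (Fin d) × ℝ)) (hΩc : IsCompact Ω)
    [CompactSpace ↥Ω]
    (r : ℝ) (hr : 0 < r)
    (hball : Metric.ball (0 : EuclideanSpace ℝ (Fin d) × ℝ) r ⊆ Ω)
    (x : Fin N → EuclideanSpace ℝ (Fin d)) (hx : Function.Injective x)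
    (Y : Fin N → ℝ)
    (φ : Fin N → C(↥Ω, ℝ))
    (hφ : ∀ i (θ : ↥Ω), φ i θ =
      σ (⟪(θ : EuclideanSpace ℝ (Fin d) × ℝ).1, x i⟫_ℝ +
        (θ : EuclideanSpace ℝ (Fin d) × ℝ).2))
    (V D : ℝ → ℝ)
    (hV : ∀ ε : ℝ, V ε = sInf {v | ∃ μ : C(↥Ω, ℝ) →L[ℝ] ℝ,
        (∀ i, |μ (φ i) - Y i| ≤ ε) ∧ v = ‖μ‖})
    (hD : ∀ ε : ℝ, D ε = sSup {v | ∃ p : Fin N → ℝ,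
        ‖∑ i, p i • φ i‖ ≤ 1 ∧ v = (∑ i, Y i * p i) - ε * ∑ i, |p i|}) :
    (∀ ε : ℝ, 0 ≤ ε → V ε = D ε) ∧
    ConvexOn ℝ (Set.Ici 0) V ∧
    LowerSemicontinuousOn V (Set.Ici 0) := by
  classical
  have hli : ∀ p : Fin N → ℝ, (∀ θ : ↥Ω, ∑ i, p i * φ i θ = 0) → p = 0 := by
    intro p hzz
    refine lin_indep_pointwise σ hσ0 hσp Ω r hr hball x hx p ?_
    intro θ
    calc ∑ i, p i * σ (⟪(θ : EuclideanSpace ℝ (Fin d) × ℝ).1, x i⟫_ℝ +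
          (θ : EuclideanSpace ℝ (Fin d) × ℝ).2)
        = ∑ i, p i * φ i θ := Finset.sum_congr rfl fun i _ => by rw [hφ i θ]
      _ = 0 := hzz θ
  have hli' : ∀ p : Fin N → ℝ, ∑ i, p i • φ i = 0 → p = 0 := by
    intro p hsum
    refine hli p fun θ => ?_
    have h := DFunLike.congr_fun hsum θ
    simpa [ContinuousMap.sum_apply, smul_eq_mul] using h
  obtain ⟨μ₀, hμ₀⟩ := exists_exact φ Y hli
  have hμ₀f : ∀ ε : ℝ, 0 ≤ ε → ∀ i, |μ₀ (φ i) - Y i| ≤ ε := by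
    intro ε hε i
    rw [hμ₀ i, sub_self, abs_zero]
    exact hε
  have hVmem : ∀ ε : ℝ, 0 ≤ ε → (‖μ₀‖ : ℝ) ∈ {v | ∃ μ : C(↥Ω, ℝ) →L[ℝ] ℝ,
      (∀ i, |μ (φ i) - Y i| ≤ ε) ∧ v = ‖μ‖} := by
    intro ε hε
    exact ⟨μ₀, hμ₀f ε hε, rfl⟩
  have hVbdd : ∀ ε : ℝ, BddBelow {v | ∃ μ : C(↥Ω, ℝ) →L[ℝ] ℝ,
      (∀ i, |μ (φ i) - Y i| ≤ ε) ∧ v = ‖μ‖} := by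
    intro ε
    refine ⟨0, ?_⟩
    rintro v ⟨μ, -, rfl⟩
    exact norm_nonneg μ
  have hD0 : ∀ ε : ℝ, (0:ℝ) ∈ {v | ∃ p : Fin N → ℝ,
      ‖∑ i, p i • φ i‖ ≤ 1 ∧ v = (∑ i, Y i * p i) - ε * ∑ i, |p i|} := by
    intro ε
    refine ⟨0, by simp, by simp⟩
  have hDne : ∀ ε : ℝ, Set.Nonempty {v | ∃ p : Fin N → ℝ,
      ‖∑ i, p i • φ i‖ ≤ 1 ∧ v = (∑ i, Y i * p i) - ε * ∑ i, |p i|} :=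
    fun ε => ⟨0, hD0 ε⟩
  have hweak : ∀ ε : ℝ, ∀ q : Fin N → ℝ, ‖∑ i, q i • φ i‖ ≤ 1 →
      ∀ μ : C(↥Ω, ℝ) →L[ℝ] ℝ, (∀ i, |μ (φ i) - Y i| ≤ ε) →
      (∑ i, Y i * q i) - ε * ∑ i, |q i| ≤ ‖μ‖ := by
    intro ε q hq μ hμ
    have h1 : μ (∑ i, q i • φ i) = ∑ i, q i * μ (φ i) := by
      rw [map_sum]
      exact Finset.sum_congr rfl fun i _ => by rw [map_smul]; rfl
    have h2 : μ (∑ i, q i • φ i) ≤ ‖μ‖ := by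
      have habs : |μ (∑ i, q i • φ i)| ≤ ‖μ‖ * ‖∑ i, q i • φ i‖ := by
        rw [← Real.norm_eq_abs]
        exact μ.le_opNorm _
      calc μ (∑ i, q i • φ i) ≤ |μ (∑ i, q i • φ i)| := le_abs_self _
        _ ≤ ‖μ‖ * ‖∑ i, q i • φ i‖ := habs
        _ ≤ ‖μ‖ * 1 := by gcongr
        _ = ‖μ‖ := mul_one _
    have h3 : ∑ i, q i * (Y i - μ (φ i)) ≤ ε * ∑ i, |q i| := by
      rw [Finset.mul_sum]
      refine Finset.sum_le_sum fun i _ => ?_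
      calc q i * (Y i - μ (φ i)) ≤ |q i * (Y i - μ (φ i))| := le_abs_self _
        _ = |q i| * |Y i - μ (φ i)| := abs_mul _ _
        _ ≤ |q i| * ε := by gcongr; rw [abs_sub_comm]; exact hμ i
        _ = ε * |q i| := mul_comm _ _
    have h4 : (∑ i, Y i * q i) = (∑ i, q i * μ (φ i)) + ∑ i, q i * (Y i - μ (φ i)) := by
      rw [← Finset.sum_add_distrib]
      exact Finset.sum_congr rfl fun i _ => by ring
    rw [h1] at h2
    rw [h4]
    linarith
  have hDbdd : ∀ ε : ℝ, 0 ≤ ε → BddAbove {v | ∃ p : Fin N → ℝ,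
      ‖∑ i, p i • φ i‖ ≤ 1 ∧ v = (∑ i, Y i * p i) - ε * ∑ i, |p i|} := by
    intro ε hε
    refine ⟨‖μ₀‖, ?_⟩
    rintro v ⟨q, hq, rfl⟩
    exact hweak ε q hq μ₀ (hμ₀f ε hε)
  have hmain : ∀ ε : ℝ, 0 ≤ ε → V ε = D ε := by
    intro ε hε
    apply le_antisymm
    · by_contra hcon
      push_neg at hcon
      have hDnn : 0 ≤ D ε := by
        rw [hD]
        exact le_csSup (hDbdd ε hε) (hD0 ε)
      set t : ℝ := (D ε + V ε) / 2 with htdef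
      have ht1 : D ε < t := by rw [htdef]; linarith
      have ht2 : t < V ε := by rw [htdef]; linarith
      have ht0 : 0 < t := lt_of_le_of_lt hDnn ht1
      have hlt : ∀ q : Fin N → ℝ, ‖∑ i, q i • φ i‖ ≤ 1 →
          (∑ i, Y i * q i) - ε * ∑ i, |q i| < t := by
        intro q hq
        have hle : (∑ i, Y i * q i) - ε * ∑ i, |q i| ≤ D ε := by
          rw [hD]
          exact le_csSup (hDbdd ε hε) ⟨q, hq, rfl⟩
        linarith
      obtain ⟨μ, hμn, hμf⟩ := strong_duality_step φ Y hli' ε t hε ht0 hlt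
      have hVle : V ε ≤ ‖μ‖ := by
        rw [hV]
        exact csInf_le (hVbdd ε) ⟨μ, hμf, rfl⟩
      linarith
    · rw [hV, hD]
      refine le_csInf ⟨‖μ₀‖, hVmem ε hε⟩ ?_
      rintro b ⟨μ, hμf, rfl⟩
      refine csSup_le (hDne ε) ?_
      rintro v ⟨q, hq, rfl⟩
      exact hweak ε q hq μ hμf
  refine ⟨hmain, ⟨convex_Ici 0, ?_⟩, ?_⟩
  · intro ε₁ h₁ ε₂ h₂ a b ha hb hab
    have h₁' : (0:ℝ) ≤ ε₁ := h₁
    have h₂' : (0:ℝ) ≤ ε₂ := h₂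
    simp only [smul_eq_mul]
    have hmem : (0:ℝ) ≤ a * ε₁ + b * ε₂ :=
      add_nonneg (mul_nonneg ha h₁') (mul_nonneg hb h₂')
    rw [hmain _ hmem, hmain _ h₁', hmain _ h₂', hD]
    refine csSup_le (hDne _) ?_
    rintro v ⟨q, hq, rfl⟩
    have d1 : (∑ i, Y i * q i) - ε₁ * ∑ i, |q i| ≤ D ε₁ := by
      rw [hD]
      exact le_csSup (hDbdd ε₁ h₁') ⟨q, hq, rfl⟩
    have d2 : (∑ i, Y i * q i) - ε₂ * ∑ i, |q i| ≤ D ε₂ := by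
      rw [hD]
      exact le_csSup (hDbdd ε₂ h₂') ⟨q, hq, rfl⟩
    have e1 : (∑ i, Y i * q i) - (a * ε₁ + b * ε₂) * ∑ i, |q i|
        = a * ((∑ i, Y i * q i) - ε₁ * ∑ i, |q i|)
          + b * ((∑ i, Y i * q i) - ε₂ * ∑ i, |q i|) := by
      linear_combination (-(∑ i, Y i * q i)) * hab
    rw [e1]
    exact add_le_add (mul_le_mul_of_nonneg_left d1 ha) (mul_le_mul_of_nonneg_left d2 hb)
  · intro ε₀ hε₀ c hc
    have hε₀' : (0:ℝ) ≤ ε₀ := hε₀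
    rw [hmain ε₀ hε₀', hD] at hc
    obtain ⟨v, hvmem, hcv⟩ := exists_lt_of_lt_csSup (hDne ε₀) hc
    obtain ⟨q, hq, rfl⟩ := hvmem
    have hLc : Continuous fun ε : ℝ => (∑ i, Y i * q i) - ε * ∑ i, |q i| := by
      fun_prop
    have hev : ∀ᶠ ε in nhds ε₀, c < (∑ i, Y i * q i) - ε * ∑ i, |q i| := by
      have hop : IsOpen {ε : ℝ | c < (∑ i, Y i * q i) - ε * ∑ i, |q i|} :=
        isOpen_lt continuous_const hLc
      exact hop.mem_nhds hcv
    have hev' : ∀ᶠ ε in nhdsWithin ε₀ (Set.Ici 0),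
        c < (∑ i, Y i * q i) - ε * ∑ i, |q i| :=
      hev.filter_mono nhdsWithin_le_nhds
    have hmemev : ∀ᶠ ε in nhdsWithin ε₀ (Set.Ici 0), ε ∈ Set.Ici (0:ℝ) :=
      self_mem_nhdsWithin
    filter_upwards [hev', hmemev] with ε hcL hεm
    have hle : (∑ i, Y i * q i) - ε * ∑ i, |q i| ≤ V ε := by
      rw [hmain ε hεm, hD]
      exact le_csSup (hDbdd ε hεm) ⟨q, hq, rfl⟩
    exact lt_of_lt_of_le hcL hle
end
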